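/- arXiv:0712.4032 — 6 statements merged into one kernel-verified Lean document; each statement's English description precedes it below -/
import Mathlib

section
/- Fix n ≥ 2 and a partition λ of n-1. For set partitions π of {2,...,n} of type λ, the number f(π) of labelled trees T on [n] with φ(T) = π is the same for all such π; i.e., f(π₁) = f(π₂) whenever π₁ and π₂ have the same multiset of block sizes. -/
/-!
Given a tree with parent function `p` and consecutive labels `x, x + 1`, there is a tree whose
head relation is that of `p` relabelled by `swap x (x + 1)`: if `x` and `x + 1` are not
neighbours, swap these two vertex labels; otherwise rearrange the edges at `x` and `x + 1`
locally. This transformation is an involution, so the number of trees with a prescribed head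
relation is invariant under adjacent transpositions of `{2, …, n}`, hence under all permutations
of `{2, …, n}`. Two set partitions of the same type differ by such a permutation.
-/

open Finset Nat

/-- A labelled tree on `[n] = {1,…,n}` encoded by its parent function when rooted at `1`:
`p v` is the parent of `v` for each non-root vertex `2 ≤ v ≤ n` (so the edges of the tree
are exactly `{v, p v}` for `2 ≤ v ≤ n`), and `p` is the identity elsewhere. -/
def IsLabelledTree (n : ℕ) (p : ℕ → ℕ) : Prop :=
  (∀ v, 2 ≤ v → v ≤ n → 1 ≤ p v ∧ p v ≤ n ∧ p v ≠ v) ∧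
  (∀ v, 2 ≤ v → v ≤ n → ∃ k, p^[k] v = 1) ∧
  (∀ v, ¬ (2 ≤ v ∧ v ≤ n) → p v = v)

/-- With every edge `{i,j}`, `i < j`, oriented `i → j`, the head of the edge labelled `v`
(the edge `{v, p v}`) is its larger endpoint. -/
def head (p : ℕ → ℕ) (v : ℕ) : ℕ := max v (p v)

/-- The indegree of vertex `u`: the number of edges oriented into `u`. -/
def indeg (n : ℕ) (p : ℕ → ℕ) (u : ℕ) : ℕ :=
  ((Finset.Icc 2 n).filter fun v => head p v = u).card

/-- `phiEq n p π` says that `π` is the partition `φ(T)` of `{2,…,n}` associated to the tree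
with parent function `p`: two edge labels lie in a common block iff the corresponding
edges point into the same vertex. -/
def phiEq (n : ℕ) (p : ℕ → ℕ) (π : Finpartition (Finset.Icc 2 n)) : Prop :=
  ∀ v ∈ Finset.Icc 2 n, ∀ w ∈ Finset.Icc 2 n,
    ((∃ b ∈ π.parts, v ∈ b ∧ w ∈ b) ↔ head p v = head p w)

open Equiv Function

lemma Finset.exists_equiv_of_map_eq {β γ : Type*} [DecidableEq γ] {A B : Finset β} {f : β → γ}
    (h : A.val.map f = B.val.map f) : ∃ e : A ≃ B, ∀ a, f (e a) = f a := by
  have hfib : ∀ c, Fintype.card {a : A // f a = c} = Fintype.card {b : B // f b = c} := by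
    intro c
    have hcount := congrArg (Multiset.count c) h
    simp only [Multiset.count_map, eq_comm (a := c)] at hcount
    simp only [Fintype.card_subtype, univ_eq_attach, filter_attach (fun a => f a = c), card_map,
      card_attach]
    exact hcount
  exact ⟨ofFiberEquiv (f := fun a : A => f a) (g := fun b : B => f b)
      fun c => Fintype.equivOfCardEq (hfib c),
    ofFiberEquiv_map (f := fun a : A => f a) (g := fun b : B => f b) _⟩

theorem Finpartition.exists_equiv_part_eq_part_iff {α : Type*} [DecidableEq α] {s : Finset α}
    {P Q : Finpartition s} (h : P.parts.val.map Finset.card = Q.parts.val.map Finset.card) :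
    ∃ e : s ≃ s, ∀ a b : s, P.part (a : α) = P.part b ↔ Q.part (e a : α) = Q.part (e b) := by
  obtain ⟨β, hβ⟩ := Finset.exists_equiv_of_map_eq h
  obtain ⟨fP, hfP⟩ := P.exists_enumeration
  obtain ⟨fQ, hfQ⟩ := Q.exists_enumeration
  let F : (Σ t : P.parts, Fin #t.1) ≃ Σ t : Q.parts, Fin #t.1 :=
    sigmaCongr β fun t => finCongr (hβ t).symm
  refine ⟨fP.trans (F.trans fQ.symm), fun a b => ?_⟩
  rw [hfP, hfQ]
  simp only [trans_apply, apply_symm_apply]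
  exact β.injective.eq_iff.symm

lemma Finpartition.exists_mem_and_mem_iff_part_eq_part {α : Type*} [DecidableEq α]
    {s : Finset α} (P : Finpartition s) {a b : α} (ha : a ∈ s) (hb : b ∈ s) :
    (∃ t ∈ P.parts, a ∈ t ∧ b ∈ t) ↔ P.part a = P.part b :=
  P.mem_part_iff_exists.symm.trans (P.mem_part_iff_part_eq_part ha hb)

theorem SubmonoidClass.swap_mem_of_forall_swap_succ_mem {C : Type*} [SetLike C (Perm ℕ)]
    [SubmonoidClass C (Perm ℕ)] (M : C) {lo hi : ℕ}
    (hM : ∀ x, lo ≤ x → x + 1 ≤ hi → swap x (x + 1) ∈ M) {a b : ℕ} (ha : lo ≤ a) (hab : a ≤ b)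
    (hb : b ≤ hi) : swap a b ∈ M := by
  induction b, hab using Nat.le_induction with
  | base => rw [swap_self]; exact one_mem M
  | succ b hab ih => exact swap_mem_trans M (ih (by omega)) (hM b (by omega) hb)

theorem Subgroup.ofSubtype_mem_of_forall_swap_mem {α : Type*} [DecidableEq α] {p : α → Prop}
    [DecidablePred p] [Finite (Subtype p)] (H : Subgroup (Perm α))
    (hH : ∀ a b, p a → p b → swap a b ∈ H) (e : Perm (Subtype p)) : Perm.ofSubtype e ∈ H := by
  induction e using Perm.swap_induction_on with
  | one => rw [map_one]; exact H.one_mem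
  | swap_mul f a b _ hf =>
    rw [map_mul, Perm.ofSubtype_swap_eq]
    exact H.mul_mem (hH a b a.2 b.2) hf

lemma swap_succ_max {x a b : ℕ} (h : ¬(a = x ∧ b = x + 1)) (h' : ¬(a = x + 1 ∧ b = x)) :
    swap x (x + 1) (max a b) = max (swap x (x + 1) a) (swap x (x + 1) b) := by
  simp only [swap_apply_def]; split_ifs <;> omega

lemma swap_succ_mem_Icc_iff {x a b v : ℕ} (ha : a ≤ x) (hb : x + 1 ≤ b) :
    swap x (x + 1) v ∈ Icc a b ↔ v ∈ Icc a b := by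
  simp only [mem_Icc, swap_apply_def]; split_ifs <;> omega

lemma Function.iterate_eq_of_forall_apply_iterate_eq {α : Type*} {p q : α → α} {u : α}
    (h : ∀ j, q (p^[j] u) = p (p^[j] u)) (k : ℕ) : q^[k] u = p^[k] u := by
  induction k with
  | zero => rfl
  | succ k ih => rw [iterate_succ_apply', iterate_succ_apply', ih, h]

lemma Function.exists_iterate_eq_of_forall_eq_or_mem {α : Type*} {p q : α → α} {S : Set α}
    {r : α} (hS : ∀ s ∈ S, ∃ m, q^[m] s = r) (hq : ∀ v ∉ S, q v = p v ∨ q v ∈ S) {k : ℕ} :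
    ∀ {v}, p^[k] v = r → ∃ m, q^[m] v = r := by
  induction k with
  | zero => exact fun hv => ⟨0, hv⟩
  | succ k ih =>
    intro v hv
    by_cases hvS : v ∈ S
    · exact hS v hvS
    obtain ⟨m, hm⟩ : ∃ m, q^[m] (q v) = r := by
      rcases hq v hvS with h | h
      · rw [h]; exact ih hv
      · exact hS _ h
    exact ⟨m + 1, hm⟩

namespace IsLabelledTree

variable {n : ℕ} {p : ℕ → ℕ}

lemma apply_one (hp : IsLabelledTree n p) : p 1 = 1 := hp.2.2 1 (by omega)

lemma exists_iterate_parent_eq_one (hp : IsLabelledTree n p) {a : ℕ} (ha : a ∈ Icc 2 n) :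
    ∃ k, p^[k] (p a) = 1 := by
  rw [mem_Icc] at ha
  obtain ⟨_ | k, hk⟩ := hp.2.1 a ha.1 ha.2
  · simp only [iterate_zero, id_eq] at hk; omega
  · exact ⟨k, hk⟩

lemma iterate_parent_ne (hp : IsLabelledTree n p) {a c i : ℕ} (ha : a ∈ Icc 2 n)
    (hc : p^[i] c = a) (j : ℕ) : p^[j] (p a) ≠ c := by
  intro hj
  obtain ⟨k, hk⟩ := hp.exists_iterate_parent_eq_one ha
  have hper : IsPeriodicPt p (i + (j + 1)) a := by
    change p^[i + (j + 1)] a = a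
    rw [iterate_add_apply, iterate_succ_apply, hj, hc]
  have : a = 1 := calc
    a = p^[(i + (j + 1)) * (k + 1)] a := (hper.mul_const _).eq.symm
    _ = p^[(i + (j + 1)) * (k + 1) - (k + 1)] (p^[k + 1] a) := by
      rw [← iterate_add_apply, Nat.sub_add_cancel (Nat.le_mul_of_pos_left _ (by omega))]
    _ = 1 := by rw [iterate_succ_apply, hk, iterate_fixed hp.apply_one]
  rw [mem_Icc] at ha
  omega

lemma of_eq_or_mem (hp : IsLabelledTree n p) {q : ℕ → ℕ} {S : Set ℕ}
    (hS : ∀ s ∈ S, 2 ≤ s ∧ s ≤ n) (hout : ∀ v ∉ S, q v = p v ∨ (p v ∈ S ∧ q v ∈ S))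
    (hrange : ∀ s ∈ S, 1 ≤ q s ∧ q s ≤ n ∧ q s ≠ s) (hreach : ∀ s ∈ S, ∃ m, q^[m] s = 1) :
    IsLabelledTree n q := by
  obtain ⟨hpr, hpreach, hpid⟩ := hp
  refine ⟨fun v hv hvn => ?_, fun v hv hvn => ?_, fun v hv => ?_⟩
  · by_cases hvS : v ∈ S
    · exact hrange v hvS
    rcases hout v hvS with h | ⟨-, h⟩
    · rw [h]; exact hpr v hv hvn
    · obtain ⟨h2, hn⟩ := hS _ h
      exact ⟨by omega, hn, fun e => hvS (e ▸ h)⟩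
  · obtain ⟨k, hk⟩ := hpreach v hv hvn
    exact exists_iterate_eq_of_forall_eq_or_mem hreach
      (fun u hu => (hout u hu).imp_right And.right) hk
  · have hvS : v ∉ S := fun h => hv (hS v h)
    rcases hout v hvS with h | ⟨h, -⟩
    · rw [h, hpid v hv]
    · rw [hpid v hv] at h; exact absurd h hvS

lemma conj (hp : IsLabelledTree n p) {σ : Perm ℕ} (h1 : σ 1 = 1)
    (hσ : ∀ v, σ v ∈ Icc 2 n ↔ v ∈ Icc 2 n) : IsLabelledTree n (σ ∘ p ∘ σ.symm) := by
  obtain ⟨hpr, hpreach, hpid⟩ := hp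
  have hσ' : ∀ v, σ.symm v ∈ Icc 2 n ↔ v ∈ Icc 2 n := fun v => by
    simpa using (hσ (σ.symm v)).symm
  simp only [mem_Icc] at hσ hσ'
  refine ⟨fun v hv hvn => ?_, fun v hv hvn => ?_, fun v hv => ?_⟩
  · obtain ⟨hu2, hun⟩ := (hσ' v).2 ⟨hv, hvn⟩
    obtain ⟨h1p, hpn, hne⟩ := hpr _ hu2 hun
    have hmem : 1 ≤ σ (p (σ.symm v)) ∧ σ (p (σ.symm v)) ≤ n := by
      rcases eq_or_ne (p (σ.symm v)) 1 with h | h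
      · rw [h, h1]; omega
      · have := (hσ _).2 ⟨by omega, hpn⟩; omega
    refine ⟨hmem.1, hmem.2, fun h => hne ?_⟩
    simpa using congrArg σ.symm h
  · obtain ⟨hu2, hun⟩ := (hσ' v).2 ⟨hv, hvn⟩
    obtain ⟨k, hk⟩ := hpreach _ hu2 hun
    have hsc : Semiconj σ p (σ ∘ p ∘ σ.symm) := fun u => by simp
    refine ⟨k, ?_⟩
    rw [← σ.apply_symm_apply v, ← (hsc.iterate_right k).eq, hk, h1]
  · simp only [comp_apply]
    rw [hpid _ (fun h => hv ((hσ' v).1 h)), apply_symm_apply]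

end IsLabelledTree

lemma head_swap_of_head_eq {p : ℕ → ℕ} {a b : ℕ} (h : head p a = head p b) (v : ℕ) :
    head p (swap a b v) = head p v := by
  rcases eq_or_ne v a with rfl | hva
  · rw [swap_apply_left, h]
  rcases eq_or_ne v b with rfl | hvb
  · rw [swap_apply_right, h]
  rw [swap_apply_of_ne_of_ne hva hvb]

def reverseChain (p : ℕ → ℕ) (c t : ℕ) : ℕ → ℕ := update (update p c (p t)) t c

lemma reverseChain_reverseChain {p : ℕ → ℕ} {c t : ℕ} (hct : c ≠ t) (h : p c = t) :
    reverseChain (reverseChain p c t) t c = p := by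
  ext v
  simp only [reverseChain, update_apply]
  split_ifs <;> simp_all

lemma reverseChain_apply_left {p : ℕ → ℕ} {c t : ℕ} (hct : c ≠ t) : reverseChain p c t c = p t := by
  rw [reverseChain, update_of_ne hct, update_self]

lemma reverseChain_apply_right (p : ℕ → ℕ) (c t : ℕ) : reverseChain p c t t = c := update_self ..

lemma reverseChain_apply_of_ne {p : ℕ → ℕ} {c t v : ℕ} (hc : v ≠ c) (ht : v ≠ t) :
    reverseChain p c t v = p v := by
  rw [reverseChain, update_of_ne ht, update_of_ne hc]

lemma IsLabelledTree.reverseChain {n : ℕ} {p : ℕ → ℕ} (hp : IsLabelledTree n p) {c t : ℕ}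
    (hc : c ∈ Icc 2 n) (ht : t ∈ Icc 2 n) (hct : c ≠ t) (h : p c = t) :
    IsLabelledTree n (reverseChain p c t) := by
  set q := _root_.reverseChain p c t
  have hqc : q c = p t := reverseChain_apply_left hct
  have hqt : q t = c := reverseChain_apply_right p c t
  have hagree : ∀ j, q (p^[j] (p t)) = p (p^[j] (p t)) := fun j =>
    reverseChain_apply_of_ne (hp.iterate_parent_ne ht (i := 1) h j)
      (hp.iterate_parent_ne ht (i := 0) rfl j)
  obtain ⟨k, hk⟩ := hp.exists_iterate_parent_eq_one ht
  have hreach_c : q^[k + 1] c = 1 := by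
    rw [iterate_succ_apply, hqc, iterate_eq_of_forall_apply_iterate_eq hagree, hk]
  rw [mem_Icc] at hc ht
  refine hp.of_eq_or_mem (S := {c, t}) (by simp [hc, ht]) (fun v hv => Or.inl ?_) ?_ ?_
  · simp only [Set.mem_insert_iff, Set.mem_singleton_iff, not_or] at hv
    exact reverseChain_apply_of_ne hv.1 hv.2
  · have hpt := hp.1 t ht.1 ht.2
    have hne : p t ≠ c := hp.iterate_parent_ne (mem_Icc.2 ht) (i := 1) h 0
    simp only [Set.mem_insert_iff, Set.mem_singleton_iff, forall_eq_or_imp, forall_eq, hqc, hqt]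
    omega
  · simp only [Set.mem_insert_iff, Set.mem_singleton_iff, forall_eq_or_imp, forall_eq]
    exact ⟨⟨k + 1, hreach_c⟩, ⟨k + 2, by rw [iterate_succ_apply, hqt, hreach_c]⟩⟩

lemma head_reverseChain {p : ℕ → ℕ} {c t : ℕ} (hct : c ≠ t) (h : p c = t) (hlt : max c t < p t)
    (v : ℕ) : head (reverseChain p c t) v = head p (swap c t v) := by
  rcases eq_or_ne v c with rfl | hvc
  · simp only [head, reverseChain_apply_left hct, swap_apply_left]; omega
  rcases eq_or_ne v t with rfl | hvt
  · simp only [head, reverseChain_apply_right, swap_apply_right, h]; omega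
  simp only [head, reverseChain_apply_of_ne hvc hvt, swap_apply_of_ne_of_ne hvc hvt]

def swapParentsBelow (x : ℕ) (p : ℕ → ℕ) : ℕ → ℕ :=
  fun v => if v ≤ x then swap x (x + 1) (p v) else p v

lemma IsLabelledTree.swapParentsBelow {n x : ℕ} {p : ℕ → ℕ} (hp : IsLabelledTree n p)
    (hx : 2 ≤ x) (hxn : x + 1 ≤ n) (h1 : p (x + 1) = x) (h2 : p x < x) :
    IsLabelledTree n (swapParentsBelow x p) := by
  set q := _root_.swapParentsBelow x p
  have hxmem : x ∈ Icc 2 n := mem_Icc.2 ⟨hx, by omega⟩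
  have hqx : q x = p x := by
    simp only [q, _root_.swapParentsBelow, le_refl, if_true]
    exact swap_apply_of_ne_of_ne (by omega) (by omega)
  have hqx1 : q (x + 1) = x := by simp [q, _root_.swapParentsBelow, h1]
  have hagree : ∀ j, q (p^[j] (p x)) = p (p^[j] (p x)) := fun j => by
    have hne := hp.iterate_parent_ne hxmem (i := 0) rfl (j + 1)
    have hne' := hp.iterate_parent_ne hxmem (i := 1) h1 (j + 1)
    rw [iterate_succ_apply'] at hne hne'
    simp only [q, _root_.swapParentsBelow, swap_apply_of_ne_of_ne hne hne', ite_self]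
  obtain ⟨k, hk⟩ := hp.exists_iterate_parent_eq_one hxmem
  have hreach_x : q^[k + 1] x = 1 := by
    rw [iterate_succ_apply, hqx, iterate_eq_of_forall_apply_iterate_eq hagree, hk]
  refine hp.of_eq_or_mem (S := {x, x + 1}) (by simp; omega) (fun v hv => ?_) ?_ ?_
  · simp only [Set.mem_insert_iff, Set.mem_singleton_iff, not_or] at hv ⊢
    simp only [q, _root_.swapParentsBelow]
    split_ifs
    · rw [swap_apply_def]; split_ifs <;> simp_all
    · exact Or.inl rfl
  · have hpx := hp.1 x hx (by omega)
    simp only [Set.mem_insert_iff, Set.mem_singleton_iff, forall_eq_or_imp, forall_eq, hqx, hqx1]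
    omega
  · simp only [Set.mem_insert_iff, Set.mem_singleton_iff, forall_eq_or_imp, forall_eq]
    exact ⟨⟨k + 1, hreach_x⟩, ⟨k + 2, by rw [iterate_succ_apply, hqx1, hreach_x]⟩⟩

lemma head_swapParentsBelow {x : ℕ} {p : ℕ → ℕ} (h1 : p (x + 1) = x) (h2 : p x < x) (v : ℕ) :
    head (swapParentsBelow x p) v = swap x (x + 1) (head p (swap x (x + 1) v)) := by
  rcases eq_or_ne v x with rfl | hvx
  · simp only [head, swapParentsBelow, swap_apply_def]; split_ifs <;> omega
  rcases eq_or_ne v (x + 1) with rfl | hvx1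
  · simp only [head, swapParentsBelow, swap_apply_def]; split_ifs <;> omega
  simp only [head, swapParentsBelow, swap_apply_of_ne_of_ne hvx hvx1]
  split_ifs with hv
  · rw [swap_succ_max (by omega) (by omega), swap_apply_of_ne_of_ne hvx hvx1]
  · rw [swap_apply_of_ne_of_ne (by omega) (by omega)]

lemma head_conj_swap {x : ℕ} {p : ℕ → ℕ} (h1 : p x ≠ x + 1) (h2 : p (x + 1) ≠ x) (v : ℕ) :
    head (swap x (x + 1) ∘ p ∘ swap x (x + 1)) v = swap x (x + 1) (head p (swap x (x + 1) v)) := by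
  obtain ⟨u, rfl⟩ : ∃ u, v = swap x (x + 1) u := ⟨swap x (x + 1) v, (swap_apply_self ..).symm⟩
  simp only [head, comp_apply, swap_apply_self]
  rw [swap_succ_max (by rintro ⟨rfl, h⟩; exact h1 h) (by rintro ⟨rfl, h⟩; exact h2 h)]

/-- An involution on trees relabelling their head relation by `swap x (x + 1)`: conjugation by
the swap, unless the edge `{x, x + 1}` is present. -/
def swapAdj (x : ℕ) (p : ℕ → ℕ) : ℕ → ℕ :=
  if p x = x + 1 then
    if p (x + 1) < x + 1 then p else reverseChain p x (x + 1)
  else if p (x + 1) = x then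
    if x + 1 < p x then reverseChain p (x + 1) x else swapParentsBelow x p
  else swap x (x + 1) ∘ p ∘ swap x (x + 1)

section SwapAdj

variable {n x : ℕ} {p : ℕ → ℕ}

lemma swapAdj_eq_self (h1 : p x = x + 1) (h2 : p (x + 1) < x + 1) : swapAdj x p = p := by
  simp [swapAdj, h1, h2]

lemma swapAdj_eq_reverseChain (h1 : p x = x + 1) (h2 : x + 1 < p (x + 1)) :
    swapAdj x p = reverseChain p x (x + 1) := by
  simp [swapAdj, h1, h2.not_gt]

lemma swapAdj_eq_reverseChain' (h1 : p (x + 1) = x) (h2 : x + 1 < p x) :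
    swapAdj x p = reverseChain p (x + 1) x := by
  simp [swapAdj, h1, h2, h2.ne']

lemma swapAdj_eq_swapParentsBelow (h1 : p (x + 1) = x) (h2 : p x < x) :
    swapAdj x p = swapParentsBelow x p := by
  simp [swapAdj, h1, (show p x ≠ x + 1 by omega), (show ¬ x + 1 < p x by omega)]

lemma swapAdj_eq_conj (h1 : p x ≠ x + 1) (h2 : p (x + 1) ≠ x) :
    swapAdj x p = swap x (x + 1) ∘ p ∘ swap x (x + 1) := by
  simp [swapAdj, h1, h2]

lemma IsLabelledTree.adjacent_cases (hp : IsLabelledTree n p) (hx : 2 ≤ x) (hxn : x + 1 ≤ n) :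
    (p x = x + 1 ∧ p (x + 1) < x + 1) ∨ (p x = x + 1 ∧ x + 1 < p (x + 1)) ∨
      (p (x + 1) = x ∧ x + 1 < p x) ∨ (p (x + 1) = x ∧ p x < x) ∨
      (p x ≠ x + 1 ∧ p (x + 1) ≠ x) := by
  have := (hp.1 x hx (by omega)).2.2
  have := (hp.1 (x + 1) (by omega) hxn).2.2
  omega

theorem IsLabelledTree.swapAdj (hp : IsLabelledTree n p) (hx : 2 ≤ x) (hxn : x + 1 ≤ n) :
    IsLabelledTree n (swapAdj x p) := by
  have hx0 : x ∈ Icc 2 n := mem_Icc.2 ⟨hx, by omega⟩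
  have hx1 : x + 1 ∈ Icc 2 n := mem_Icc.2 ⟨by omega, hxn⟩
  rcases hp.adjacent_cases hx hxn with ⟨h1, h2⟩ | ⟨h1, h2⟩ | ⟨h1, h2⟩ | ⟨h1, h2⟩ | ⟨h1, h2⟩
  · rwa [swapAdj_eq_self h1 h2]
  · rw [swapAdj_eq_reverseChain h1 h2]; exact hp.reverseChain hx0 hx1 (by omega) h1
  · rw [swapAdj_eq_reverseChain' h1 h2]; exact hp.reverseChain hx1 hx0 (by omega) h1
  · rw [swapAdj_eq_swapParentsBelow h1 h2]; exact hp.swapParentsBelow hx hxn h1 h2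
  · rw [swapAdj_eq_conj h1 h2]
    simpa [symm_swap] using hp.conj (σ := swap x (x + 1))
      (swap_apply_of_ne_of_ne (by omega) (by omega)) fun v => swap_succ_mem_Icc_iff hx hxn

theorem swapAdj_swapAdj (hp : IsLabelledTree n p) (hx : 2 ≤ x) (hxn : x + 1 ≤ n) :
    swapAdj x (swapAdj x p) = p := by
  rcases hp.adjacent_cases hx hxn with ⟨h1, h2⟩ | ⟨h1, h2⟩ | ⟨h1, h2⟩ | ⟨h1, h2⟩ | ⟨h1, h2⟩
  · rw [swapAdj_eq_self h1 h2, swapAdj_eq_self h1 h2]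
  · rw [swapAdj_eq_reverseChain h1 h2, swapAdj_eq_reverseChain' (reverseChain_apply_right ..)
      (by rwa [reverseChain_apply_left (by omega)]), reverseChain_reverseChain (by omega) h1]
  · rw [swapAdj_eq_reverseChain' h1 h2, swapAdj_eq_reverseChain (reverseChain_apply_right ..)
      (by rwa [reverseChain_apply_left (by omega)]), reverseChain_reverseChain (by omega) h1]
  · have hq1 : swapParentsBelow x p (x + 1) = x := by simp [swapParentsBelow, h1]
    have hq2 : swapParentsBelow x p x < x := by
      simp only [swapParentsBelow, le_refl, if_true]
      rwa [swap_apply_of_ne_of_ne (by omega) (by omega)]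
    rw [swapAdj_eq_swapParentsBelow h1 h2, swapAdj_eq_swapParentsBelow hq1 hq2]
    ext v
    simp only [swapParentsBelow]
    split_ifs <;> simp
  · rw [swapAdj_eq_conj h1 h2, swapAdj_eq_conj (by simpa [swap_apply_eq_iff] using h2)
      (by simpa [swap_apply_eq_iff] using h1)]
    ext v
    simp

theorem exists_head_swapAdj (hp : IsLabelledTree n p) (hx : 2 ≤ x) (hxn : x + 1 ≤ n) :
    ∃ g : ℕ → ℕ, Injective g ∧ ∀ v, head (swapAdj x p) v = g (head p (swap x (x + 1) v)) := by
  rcases hp.adjacent_cases hx hxn with ⟨h1, h2⟩ | ⟨h1, h2⟩ | ⟨h1, h2⟩ | ⟨h1, h2⟩ | ⟨h1, h2⟩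
  · refine ⟨id, injective_id, fun v => ?_⟩
    rw [swapAdj_eq_self h1 h2, id, head_swap_of_head_eq (by simp only [head]; omega)]
  · refine ⟨id, injective_id, fun v => ?_⟩
    rw [swapAdj_eq_reverseChain h1 h2, id, head_reverseChain (by omega) h1 (by omega)]
  · refine ⟨id, injective_id, fun v => ?_⟩
    rw [swapAdj_eq_reverseChain' h1 h2, id, head_reverseChain (by omega) h1 (by omega), swap_comm]
  · exact ⟨_, (swap x (x + 1)).injective, fun v => by
      rw [swapAdj_eq_swapParentsBelow h1 h2, head_swapParentsBelow h1 h2]⟩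
  · exact ⟨_, (swap x (x + 1)).injective, fun v => by
      rw [swapAdj_eq_conj h1 h2, head_conj_swap h1 h2]⟩

end SwapAdj

def IsHeadRel (n : ℕ) (p : ℕ → ℕ) (R : ℕ → ℕ → Prop) : Prop :=
  ∀ v ∈ Icc 2 n, ∀ w ∈ Icc 2 n, (R v w ↔ head p v = head p w)

noncomputable def treeCount (n : ℕ) (R : ℕ → ℕ → Prop) : ℕ :=
  Nat.card {p : ℕ → ℕ // IsLabelledTree n p ∧ IsHeadRel n p R}

lemma treeCount_congr {n : ℕ} {R R' : ℕ → ℕ → Prop}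
    (h : ∀ v ∈ Icc 2 n, ∀ w ∈ Icc 2 n, (R v w ↔ R' v w)) : treeCount n R = treeCount n R' :=
  Nat.card_congr <| subtypeEquivRight fun _ => and_congr_right fun _ =>
    forall₂_congr fun v hv => forall₂_congr fun w hw => by rw [h v hv w hw]

lemma IsHeadRel.swapAdj {n x : ℕ} {p : ℕ → ℕ} {R : ℕ → ℕ → Prop} (hR : IsHeadRel n p R)
    (hp : IsLabelledTree n p) (hx : 2 ≤ x) (hxn : x + 1 ≤ n) :
    IsHeadRel n (swapAdj x p) fun v w => R (swap x (x + 1) v) (swap x (x + 1) w) := by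
  obtain ⟨g, hg, hhead⟩ := exists_head_swapAdj hp hx hxn
  intro v hv w hw
  beta_reduce
  rw [hR _ ((swap_succ_mem_Icc_iff hx hxn).2 hv) _ ((swap_succ_mem_Icc_iff hx hxn).2 hw),
    hhead, hhead, hg.eq_iff]

theorem treeCount_swap_succ {n x : ℕ} (hx : 2 ≤ x) (hxn : x + 1 ≤ n) (R : ℕ → ℕ → Prop) :
    treeCount n (fun v w => R (swap x (x + 1) v) (swap x (x + 1) w)) = treeCount n R :=
  Nat.card_congr
    { toFun := fun p => ⟨swapAdj x p, p.2.1.swapAdj hx hxn, by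
        simpa only [swap_apply_self] using p.2.2.swapAdj p.2.1 hx hxn⟩
      invFun := fun p => ⟨swapAdj x p, p.2.1.swapAdj hx hxn, p.2.2.swapAdj p.2.1 hx hxn⟩
      left_inv := fun p => Subtype.ext (swapAdj_swapAdj p.2.1 hx hxn)
      right_inv := fun p => Subtype.ext (swapAdj_swapAdj p.2.1 hx hxn) }

def treeCountInvariant (n : ℕ) : Subgroup (Perm ℕ) where
  carrier := {σ | ∀ R, treeCount n (fun v w => R (σ v) (σ w)) = treeCount n R}
  one_mem' _ := rfl
  mul_mem' {σ τ} hσ hτ R := (hτ fun v w => R (σ v) (σ w)).trans (hσ R)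
  inv_mem' {σ} hσ R := by simpa using (hσ fun v w => R (σ⁻¹ v) (σ⁻¹ w)).symm

lemma swap_mem_treeCountInvariant {n a b : ℕ} (ha : a ∈ Icc 2 n) (hb : b ∈ Icc 2 n) :
    swap a b ∈ treeCountInvariant n := by
  wlog hab : a ≤ b generalizing a b
  · rw [swap_comm]; exact this hb ha (by omega)
  rw [mem_Icc] at ha hb
  exact SubmonoidClass.swap_mem_of_forall_swap_succ_mem (treeCountInvariant n)
    (fun x hx hxn => treeCount_swap_succ hx hxn) ha.1 hab hb.2

theorem card_preimage_depends_only_on_type_general (n : ℕ)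
    (π₁ π₂ : Finpartition (Finset.Icc 2 n))
    (h : Multiset.map Finset.card π₁.parts.val = Multiset.map Finset.card π₂.parts.val) :
    Nat.card {p : ℕ → ℕ // IsLabelledTree n p ∧ phiEq n p π₁} =
      Nat.card {p : ℕ → ℕ // IsLabelledTree n p ∧ phiEq n p π₂} := by
  obtain ⟨e, he⟩ := Finpartition.exists_equiv_part_eq_part_iff h
  have hσ : Perm.ofSubtype e ∈ treeCountInvariant n :=
    Subgroup.ofSubtype_mem_of_forall_swap_mem _ (fun _ _ => swap_mem_treeCountInvariant) e
  change treeCount n (fun v w => ∃ b ∈ π₁.parts, v ∈ b ∧ w ∈ b) =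
    treeCount n (fun v w => ∃ b ∈ π₂.parts, v ∈ b ∧ w ∈ b)
  rw [← hσ fun v w => ∃ b ∈ π₂.parts, v ∈ b ∧ w ∈ b]
  refine treeCount_congr fun v hv w hw => ?_
  rw [Perm.ofSubtype_apply_of_mem e hv, Perm.ofSubtype_apply_of_mem e hw,
    π₁.exists_mem_and_mem_iff_part_eq_part hv hw,
    π₂.exists_mem_and_mem_iff_part_eq_part (e ⟨v, hv⟩).2 (e ⟨w, hw⟩).2]
  exact he ⟨v, hv⟩ ⟨w, hw⟩

/-- The number `f(π)` of labelled trees `T` on `[n]` with `φ(T) = π` depends only on the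
type of `π`: `f(π₁) = f(π₂)` whenever `π₁` and `π₂` have the same multiset of block sizes. -/
theorem card_preimage_depends_only_on_type (n : ℕ) (hn : 2 ≤ n)
    (π₁ π₂ : Finpartition (Finset.Icc 2 n))
    (h : Multiset.map Finset.card π₁.parts.val = Multiset.map Finset.card π₂.parts.val) :
    Nat.card {p : ℕ → ℕ // IsLabelledTree n p ∧ phiEq n p π₁} =
      Nat.card {p : ℕ → ℕ // IsLabelledTree n p ∧ phiEq n p π₂} :=
  card_preimage_depends_only_on_type_general n π₁ π₂ h
end

section
/- Let n ≥ 2 and let σ be a set partition of {2,...,n} with k blocks. Then Σ over set partitions π of {2,...,n} coarsening σ of (n-1)!/(n-|π|)! equals n^{k-1}, where |π| denotes the number of blocks of π. -/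
/-!
Count the maps `g` from the `k` blocks of `σ` to an `n`-set in two ways. There are `n ^ k` of
them. Merging the blocks of `σ` on which `g` takes equal values gives a partition `ker g`
coarsening `σ`, and the maps with `ker g = π` are exactly the injections of the blocks of `π`
into the `n`-set, of which there are `n! / (n - |π|)!`. Dividing by `n` gives the identity.
-/

open Finset Function

theorem Function.Surjective.natCard_ker_eq_ker {A B β : Type*} [Fintype B] [Fintype β]
    {u : A → B} (hu : Surjective u) :
    Nat.card {g : A → β // ∀ a a', g a = g a' ↔ u a = u a'} =
      (Fintype.card β).descFactorial (Fintype.card B) := by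
  classical
  rw [← Fintype.card_embedding_eq, ← Nat.card_eq_fintype_card]
  refine Nat.card_congr
    { toFun := fun g => ⟨g.1 ∘ surjInv hu, fun b b' h => ?_⟩
      invFun := fun ι => ⟨ι ∘ u, fun a a' => ι.injective.eq_iff⟩
      left_inv := fun g => Subtype.ext (funext fun a => (g.2 _ _).2 (surjInv_eq hu (u a)))
      right_inv := fun ι => DFunLike.ext _ _ fun b => congrArg ι (surjInv_eq hu b) }
  simpa [surjInv_eq hu] using (g.2 _ _).1 h

namespace Finpartition

variable {α β γ : Type*} [DecidableEq α] [DecidableEq β] [DecidableEq γ] {s : Finset α}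
  {σ π : Finpartition s}

variable (σ) in
def kerPart (g : σ.parts → β) (b : σ.parts) : Finset α :=
  {c ∈ σ.parts.attach | g c = g b}.sup Subtype.val

theorem mem_kerPart {g : σ.parts → β} {b : σ.parts} {x : α} :
    x ∈ σ.kerPart g b ↔ ∃ c : σ.parts, g c = g b ∧ x ∈ (c : Finset α) := by
  simp [kerPart, Finset.mem_sup]

theorem subset_kerPart (g : σ.parts → β) (b : σ.parts) : (b : Finset α) ⊆ σ.kerPart g b :=
  fun _ hx => mem_kerPart.2 ⟨b, rfl, hx⟩

theorem eq_of_mem_kerPart {g : σ.parts → β} {b c : σ.parts} {x : α}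
    (hb : x ∈ σ.kerPart g b) (hc : x ∈ σ.kerPart g c) : g b = g c := by
  obtain ⟨b', hb', hxb'⟩ := mem_kerPart.1 hb
  obtain ⟨c', hc', hxc'⟩ := mem_kerPart.1 hc
  rw [← hb', ← hc', Subtype.ext (σ.eq_of_mem_parts b'.2 c'.2 hxb' hxc')]

theorem kerPart_eq_kerPart_iff {g : σ.parts → β} {b c : σ.parts} :
    σ.kerPart g b = σ.kerPart g c ↔ g b = g c := by
  refine ⟨fun h => ?_, fun h => by simp only [kerPart, h]⟩
  obtain ⟨x, hx⟩ := σ.nonempty_of_mem_parts b.2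
  exact eq_of_mem_kerPart (subset_kerPart g b hx) (h ▸ subset_kerPart g b hx)

variable (σ) in
def ker (g : σ.parts → β) : Finpartition s where
  parts := σ.parts.attach.image (σ.kerPart g)
  supIndep := by
    rw [Finset.supIndep_iff_pairwiseDisjoint]
    intro _ ht _ hu hbc
    obtain ⟨b, -, rfl⟩ := mem_image.1 ht
    obtain ⟨c, -, rfl⟩ := mem_image.1 hu
    exact Finset.disjoint_left.2 fun x hb hc =>
      hbc (kerPart_eq_kerPart_iff.2 (eq_of_mem_kerPart hb hc))
  sup_parts := by
    refine le_antisymm (Finset.sup_le ?_) fun x hx => ?_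
    · intro _ ht x hx
      obtain ⟨b, -, rfl⟩ := mem_image.1 ht
      obtain ⟨c, -, hxc⟩ := mem_kerPart.1 hx
      exact σ.le c.2 hxc
    · let b : σ.parts := ⟨σ.part x, σ.part_mem.2 hx⟩
      exact Finset.mem_sup.2 ⟨σ.kerPart g b, mem_image_of_mem _ (mem_attach _ _),
        subset_kerPart g b (σ.mem_part hx)⟩
  bot_notMem := by
    intro h
    obtain ⟨b, -, hb⟩ := mem_image.1 h
    obtain ⟨x, hx⟩ := σ.nonempty_of_mem_parts b.2
    simpa [hb] using subset_kerPart g b hx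

theorem mem_ker_parts {g : σ.parts → β} {t : Finset α} :
    t ∈ (σ.ker g).parts ↔ ∃ b, σ.kerPart g b = t := by
  simp [ker]

theorem le_ker (g : σ.parts → β) : σ ≤ σ.ker g := fun b hb =>
  ⟨_, mem_ker_parts.2 ⟨⟨b, hb⟩, rfl⟩, subset_kerPart g ⟨b, hb⟩⟩

theorem ker_eq_ker_iff {g : σ.parts → β} {h : σ.parts → γ} :
    σ.ker g = σ.ker h ↔ ∀ b c, g b = g c ↔ h b = h c := by
  refine ⟨fun hgh b c => ?_, fun hgh => ?_⟩
  · have hpart : ∀ b, σ.kerPart g b = σ.kerPart h b := fun b => by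
      obtain ⟨x, hx⟩ := σ.nonempty_of_mem_parts b.2
      refine (σ.ker h).eq_of_mem_parts ?_ (mem_ker_parts.2 ⟨b, rfl⟩)
        (subset_kerPart g b hx) (subset_kerPart h b hx)
      exact hgh ▸ mem_ker_parts.2 ⟨b, rfl⟩
    rw [← kerPart_eq_kerPart_iff (g := g), ← kerPart_eq_kerPart_iff (g := h), hpart, hpart]
  · have hpart : σ.kerPart g = σ.kerPart h := by
      ext b x
      simp only [mem_kerPart, hgh]
    ext t
    simp only [mem_ker_parts, hpart]

noncomputable def partAbove (π : Finpartition s) {σ : Finpartition s} (b : σ.parts) : π.parts :=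
  ⟨π.part (σ.nonempty_of_mem_parts b.2).choose,
    π.part_mem.2 (σ.le b.2 (σ.nonempty_of_mem_parts b.2).choose_spec)⟩

theorem subset_partAbove (h : σ ≤ π) (b : σ.parts) : (b : Finset α) ⊆ π.partAbove b := by
  obtain ⟨c, hc, hbc⟩ := h b.2
  change ↑b ⊆ π.part _
  rwa [π.part_eq_of_mem hc (hbc (σ.nonempty_of_mem_parts b.2).choose_spec)]

theorem partAbove_eq_of_mem (h : σ ≤ π) {b : σ.parts} {d : π.parts} {x : α}
    (hxb : x ∈ (b : Finset α)) (hxd : x ∈ (d : Finset α)) : π.partAbove b = d :=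
  Subtype.ext <| π.eq_of_mem_parts (π.partAbove b).2 d.2 (subset_partAbove h b hxb) hxd

theorem partAbove_surjective (h : σ ≤ π) : Surjective (π.partAbove (σ := σ)) := fun d => by
  obtain ⟨x, hx⟩ := π.nonempty_of_mem_parts d.2
  have hxs : x ∈ s := π.le d.2 hx
  exact ⟨⟨σ.part x, σ.part_mem.2 hxs⟩, partAbove_eq_of_mem h (σ.mem_part hxs) hx⟩

theorem kerPart_partAbove (h : σ ≤ π) (b : σ.parts) :
    σ.kerPart π.partAbove b = π.partAbove b := by
  ext x
  refine mem_kerPart.trans ⟨?_, fun hx => ?_⟩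
  · rintro ⟨c, hcb, hxc⟩
    exact hcb ▸ subset_partAbove h c hxc
  · have hxs : x ∈ s := π.le (π.partAbove b).2 hx
    exact ⟨⟨σ.part x, σ.part_mem.2 hxs⟩, partAbove_eq_of_mem h (σ.mem_part hxs) hx,
      σ.mem_part hxs⟩

theorem ker_partAbove (h : σ ≤ π) : σ.ker π.partAbove = π := by
  ext t
  simp only [mem_ker_parts, kerPart_partAbove h]
  refine ⟨fun ⟨b, hb⟩ => hb ▸ (π.partAbove b).2, fun ht => ?_⟩
  obtain ⟨b, hb⟩ := partAbove_surjective h ⟨t, ht⟩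
  exact ⟨b, congrArg Subtype.val hb⟩

theorem ker_eq_iff (h : σ ≤ π) {g : σ.parts → β} :
    σ.ker g = π ↔ ∀ b c, g b = g c ↔ π.partAbove b = π.partAbove c := by
  rw [← ker_eq_ker_iff, ker_partAbove h]

theorem natCard_ker_eq [Fintype β] (h : σ ≤ π) :
    Nat.card {g : σ.parts → β // σ.ker g = π} =
      (Fintype.card β).descFactorial #π.parts := by
  simp_rw [ker_eq_iff h]
  rw [(partAbove_surjective h).natCard_ker_eq_ker, Fintype.card_coe]

open scoped Classical in
theorem sum_descFactorial_card_parts_of_le (σ : Finpartition s) (n : ℕ) :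
    ∑ π : Finpartition s, (if σ ≤ π then n.descFactorial #π.parts else 0) =
      n ^ #σ.parts := by
  calc _ = ∑ π : Finpartition s, #{g : σ.parts → Fin n | σ.ker g = π} :=
        sum_congr rfl fun π _ => ?_
    _ = n ^ #σ.parts := by
        rw [← card_eq_sum_card_fiberwise fun _ _ => mem_univ _, card_univ, Fintype.card_fun,
          Fintype.card_coe, Fintype.card_fin]
  split_ifs with h
  · rw [← Fintype.card_subtype, ← Nat.card_eq_fintype_card, natCard_ker_eq h, Fintype.card_fin]
  · refine (card_eq_zero.2 (filter_eq_empty_iff.2 ?_)).symm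
    intro g _ hg
    exact h (hg ▸ le_ker g)

end Finpartition

theorem Nat.cast_descFactorial_div_self {K : Type*} [Field K] [CharZero K] {n k : ℕ}
    (hn : n ≠ 0) (hk : k ≤ n) :
    (n.descFactorial k : K) / n = (n - 1).factorial / (n - k).factorial := by
  have key : n.descFactorial k * (n - k).factorial = (n - 1).factorial * n := by
    rw [mul_comm, Nat.factorial_mul_descFactorial hk, ← Nat.mul_factorial_pred hn, mul_comm]
  rw [div_eq_div_iff (by exact_mod_cast hn) (by exact_mod_cast (n - k).factorial_ne_zero)]
  exact_mod_cast key

open scoped Classical in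
/-- For `n ≥ 2` and a set partition `σ` of `{2,…,n}` with `k` blocks, the sum over set
partitions `π` of `{2,…,n}` coarsening `σ` of `(n-1)!/(n-|π|)!` equals `n^(k-1)`. -/
theorem sum_over_coarsenings (n : ℕ) (hn : 2 ≤ n) (σ : Finpartition (Finset.Icc 2 n)) :
    ∑ π : Finpartition (Finset.Icc 2 n),
        (if σ ≤ π then (Nat.factorial (n - 1) : ℚ) / (Nat.factorial (n - π.parts.card) : ℚ)
          else 0) =
      (n : ℚ) ^ (σ.parts.card - 1) := by
  have hn0 : n ≠ 0 := by omega
  have hcard : ∀ π : Finpartition (Icc 2 n), #π.parts ≤ n := fun π =>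
    π.card_parts_le_card.trans (by simp)
  have hσ : 1 ≤ #σ.parts := card_pos.2 (σ.parts_nonempty (nonempty_Icc.2 (by omega)).ne_empty)
  calc _ = ∑ π : Finpartition (Icc 2 n),
        (if σ ≤ π then (n.descFactorial #π.parts : ℚ) else 0) / n := by
        refine sum_congr rfl fun π _ => ?_
        split_ifs
        · rw [Nat.cast_descFactorial_div_self hn0 (hcard π)]
        · rw [zero_div]
    _ = (n : ℚ) ^ #σ.parts / n := by
        rw [← sum_div]
        congr 1
        exact_mod_cast congrArg (Nat.cast (R := ℚ)) (σ.sum_descFactorial_card_parts_of_le n)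
    _ = (n : ℚ) ^ (#σ.parts - 1) := by
        rw [pow_sub₀ _ (by exact_mod_cast hn0) hσ, pow_one, div_eq_mul_inv]
end

section
/- Let n ≥ 2. If for every set partition σ of {2,...,n}, a function f on set partitions of {2,...,n} satisfies Σ_{π ⪰ σ} f(π) = n^{|σ|-1}, then f(π) = (n-1)!/(n-|π|)! for every partition π of {2,...,n}. -/
/-!
Colour the blocks of `σ` with `n` colours and sort the colourings by the coarsening of `σ` they
induce (merge the blocks of a common colour). The colourings inducing `π ⪰ σ` are exactly the
injective colourings of the blocks of `π`, so `Σ_{π ⪰ σ} n (n-1) ⋯ (n-|π|+1) = n^|σ|`. Dividing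
by `n`, `π ↦ (n-1)!/(n-|π|)!` solves the same triangular system as `f`, and that system has at
most one solution, by downward induction in the finite refinement order.
-/

open Finset Function

theorem eq_of_forall_sum_ite_le_eq {P M : Type*} [PartialOrder P] [Fintype P] [DecidableLE P]
    [AddCancelCommMonoid M] {f g : P → M}
    (h : ∀ σ, ∑ π, (if σ ≤ π then f π else 0) = ∑ π, if σ ≤ π then g π else 0) : f = g := by
  classical
  funext σ
  induction σ using WellFoundedGT.induction with
  | _ σ ih =>
    have hrest : ∑ π ∈ univ.erase σ, (if σ ≤ π then f π else 0) =
        ∑ π ∈ univ.erase σ, if σ ≤ π then g π else 0 :=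
      sum_congr rfl fun π hπ =>
        ite_congr rfl (fun hle => ih π (hle.lt_of_ne (ne_of_mem_erase hπ).symm)) fun _ => rfl
    have hσ := h σ
    rw [← add_sum_erase _ _ (mem_univ σ), ← add_sum_erase _ _ (mem_univ σ), hrest,
      if_pos le_rfl, if_pos le_rfl] at hσ
    exact add_right_cancel hσ

theorem card_filter_forall_eq_iff_eq_card_embedding {ι κ β : Type*} [Fintype ι] [Fintype κ]
    [Fintype β] [DecidableEq ι] [DecidableEq β] [DecidableEq κ] {u : ι → κ} (hu : Surjective u) :
    #{φ : ι → β | ∀ i j, φ i = φ j ↔ u i = u j} = Fintype.card (κ ↪ β) := by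
  rw [← card_univ]
  symm
  refine card_bij (fun ψ _ => ψ ∘ u) (fun ψ _ => ?_) (fun ψ _ ψ' _ hψ => ?_) fun φ hφ => ?_
  · simp [ψ.injective.eq_iff]
  · exact DFunLike.coe_injective (hu.injective_comp_right hψ)
  · have hφ : ∀ i j, φ i = φ j ↔ u i = u j := by simpa using hφ
    refine ⟨⟨φ ∘ surjInv hu, fun c c' hcc' => ?_⟩, mem_univ _, funext fun i => ?_⟩
    · simpa [surjInv_eq] using (hφ _ _).1 hcc'
    · exact (hφ _ _).2 (surjInv_eq hu _)

namespace Finpartition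

variable {α β : Type*} [DecidableEq α] {s : Finset α}

section Merge

variable [DecidableEq β] (σ : Finpartition s) (φ : σ.parts → β)

def colourClass (i : β) : Finset α :=
  ({b | φ b = i} : Finset σ.parts).sup (↑)

lemma le_colourClass (b : σ.parts) : (b : Finset α) ≤ colourClass σ φ (φ b) :=
  le_sup (f := ((↑) : σ.parts → Finset α)) (by simp)

lemma colourClass_le (i : β) : colourClass σ φ i ≤ s :=
  Finset.sup_le fun b _ => σ.le b.2

lemma disjoint_colourClass {i j : β} (hij : i ≠ j) :
    Disjoint (colourClass σ φ i) (colourClass σ φ j) := by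
  rw [colourClass, Finset.disjoint_sup_left]
  intro b hb
  rw [colourClass, Finset.disjoint_sup_right]
  intro c hc
  simp only [mem_filter, mem_univ, true_and] at hb hc
  subst hb hc
  exact σ.disjoint b.2 c.2 fun hbc => hij (by rw [Subtype.ext hbc])

def merge : Finpartition s where
  parts := univ.image fun b => colourClass σ φ (φ b)
  supIndep := by
    rw [supIndep_iff_pairwiseDisjoint]
    simp only [Set.PairwiseDisjoint, Set.Pairwise, coe_image, coe_univ, Set.image_univ,
      Set.mem_range, forall_exists_index, forall_apply_eq_imp_iff]
    intro b c hbc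
    exact disjoint_colourClass σ φ fun h => hbc (by rw [h])
  sup_parts := by
    refine le_antisymm (Finset.sup_le fun c hc => ?_) ?_
    · obtain ⟨b, -, rfl⟩ := mem_image.1 hc
      exact colourClass_le σ φ _
    · conv_lhs => rw [← σ.sup_parts]
      refine Finset.sup_le fun b hb => (le_colourClass σ φ ⟨b, hb⟩).trans ?_
      exact le_sup (f := id) (mem_image_of_mem _ (mem_univ _))
  bot_notMem := by
    simp only [mem_image, mem_univ, true_and, not_exists]
    intro b hb
    exact σ.ne_bot b.2 (le_bot_iff.1 (hb ▸ le_colourClass σ φ b))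

lemma colourClass_mem_merge (b : σ.parts) : colourClass σ φ (φ b) ∈ (merge σ φ).parts :=
  mem_image_of_mem _ (mem_univ _)

lemma le_merge : σ ≤ merge σ φ := fun b hb =>
  ⟨_, colourClass_mem_merge σ φ ⟨b, hb⟩, le_colourClass σ φ ⟨b, hb⟩⟩

end Merge

section BlockAbove

variable {σ π : Finpartition s} (h : σ ≤ π)

noncomputable def blockAbove (b : σ.parts) : π.parts :=
  ⟨(h b.2).choose, (h b.2).choose_spec.1⟩

lemma le_blockAbove (b : σ.parts) : (b : Finset α) ≤ blockAbove h b :=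
  (h b.2).choose_spec.2

lemma blockAbove_eq_iff {b : σ.parts} {c : π.parts} :
    blockAbove h b = c ↔ (b : Finset α) ⊆ c := by
  refine ⟨fun hbc => hbc ▸ le_blockAbove h b, fun hbc => ?_⟩
  obtain ⟨x, hx⟩ := σ.nonempty_of_mem_parts b.2
  exact Subtype.ext (π.eq_of_mem_parts (blockAbove h b).2 c.2 (le_blockAbove h b hx) (hbc hx))

lemma blockAbove_surjective : Surjective (blockAbove h) := fun c => by
  obtain ⟨b, hb, hbc⟩ := exists_le_of_le h c.2
  exact ⟨⟨b, hb⟩, (blockAbove_eq_iff h).2 hbc⟩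

lemma sup_filter_blockAbove_eq (c : π.parts) :
    ({b | blockAbove h b = c} : Finset σ.parts).sup (↑) = (c : Finset α) := by
  refine le_antisymm (Finset.sup_le fun b hb => (blockAbove_eq_iff h).1 (mem_filter.1 hb).2) ?_
  intro x hx
  obtain ⟨b, hb, hxb⟩ := σ.exists_mem (π.le c.2 hx)
  have hbc : blockAbove h ⟨b, hb⟩ = c :=
    Subtype.ext (π.eq_of_mem_parts (blockAbove h _).2 c.2 (le_blockAbove h ⟨b, hb⟩ hxb) hx)
  exact mem_sup.2 ⟨⟨b, hb⟩, by simpa using hbc, hxb⟩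

variable [DecidableEq β] {φ : σ.parts → β}

lemma merge_eq_iff :
    merge σ φ = π ↔ ∀ b b', φ b = φ b' ↔ blockAbove h b = blockAbove h b' := by
  constructor
  · rintro rfl
    have hblock (b : σ.parts) : (blockAbove h b : Finset α) = colourClass σ φ (φ b) :=
      congrArg Subtype.val ((blockAbove_eq_iff h (c := ⟨_, colourClass_mem_merge σ φ b⟩)).2
        (le_colourClass σ φ b))
    refine fun b b' => ⟨fun hφ => Subtype.ext (by rw [hblock, hblock, hφ]), fun hbb' => ?_⟩
    by_contra hφ
    have hdisj := disjoint_colourClass σ φ hφ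
    rw [← hblock, ← hblock, hbb', disjoint_self] at hdisj
    exact Finpartition.ne_bot _ (blockAbove h b').2 hdisj
  · intro hφ
    have hblock (b : σ.parts) : colourClass σ φ (φ b) = blockAbove h b := by
      simp only [colourClass, hφ, ← sup_filter_blockAbove_eq h (blockAbove h b)]
    ext c
    simp only [merge, hblock, mem_image, mem_univ, true_and]
    refine ⟨?_, fun hc => ?_⟩
    · rintro ⟨b, rfl⟩
      exact (blockAbove h b).2
    · obtain ⟨b, hb⟩ := blockAbove_surjective h ⟨c, hc⟩
      exact ⟨b, by rw [hb]⟩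

end BlockAbove

lemma card_filter_merge_eq [Fintype β] [DecidableEq β] (σ π : Finpartition s) [Decidable (σ ≤ π)] :
    #{φ : σ.parts → β | merge σ φ = π} =
      if σ ≤ π then (Fintype.card β).descFactorial #π.parts else 0 := by
  split_ifs with h
  · simp_rw [merge_eq_iff h]
    rw [card_filter_forall_eq_iff_eq_card_embedding (blockAbove_surjective h),
      Fintype.card_embedding_eq, Fintype.card_coe]
  · rw [card_eq_zero, filter_eq_empty_iff]
    exact fun φ _ hφ => h (hφ ▸ le_merge σ φ)

theorem sum_descFactorial_card_parts (σ : Finpartition s) [DecidablePred (σ ≤ ·)] (n : ℕ) :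
    ∑ π : Finpartition s, (if σ ≤ π then n.descFactorial #π.parts else 0) = n ^ #σ.parts := by
  have hfibres := card_eq_sum_card_fiberwise (f := merge σ (β := Fin n)) (s := univ) (t := univ)
    fun _ _ => mem_coe.2 (mem_univ _)
  simp only [card_univ, Fintype.card_fun, Fintype.card_coe, Fintype.card_fin] at hfibres
  rw [hfibres]
  exact sum_congr rfl fun π _ => by rw [card_filter_merge_eq, Fintype.card_fin]

end Finpartition

lemma Nat.cast_descFactorial_eq_mul_factorial_div {K : Type*} [Field K] [CharZero K] {n k : ℕ}
    (hn : n ≠ 0) (hk : k ≤ n) :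
    (n.descFactorial k : K) = n * ((n - 1).factorial / (n - k).factorial) := by
  rw [mul_div_assoc', eq_div_iff (Nat.cast_ne_zero.2 (Nat.factorial_ne_zero _))]
  exact_mod_cast by rw [mul_comm, Nat.factorial_mul_descFactorial hk, Nat.mul_factorial_pred hn]

open scoped Classical in
/-- Let `n ≥ 2`.  If a function `f` on set partitions of `{2,…,n}` satisfies
`Σ_{π ⪰ σ} f(π) = n^(|σ|-1)` for every set partition `σ` of `{2,…,n}`, then
`f(π) = (n-1)!/(n-|π|)!` for every partition `π` of `{2,…,n}`. -/
theorem solution_unique (n : ℕ) (hn : 2 ≤ n) (f : Finpartition (Finset.Icc 2 n) → ℚ)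
    (h : ∀ σ : Finpartition (Finset.Icc 2 n),
      ∑ π : Finpartition (Finset.Icc 2 n), (if σ ≤ π then f π else 0) =
        (n : ℚ) ^ (σ.parts.card - 1)) :
    ∀ π : Finpartition (Finset.Icc 2 n),
      f π = (Nat.factorial (n - 1) : ℚ) / (Nat.factorial (n - π.parts.card) : ℚ) := by
  have hn0 : n ≠ 0 := by omega
  have hcard (π : Finpartition (Icc 2 n)) : #π.parts ≤ n :=
    π.card_parts_le_card.trans (by simp)
  refine congrFun (eq_of_forall_sum_ite_le_eq fun σ => ?_)
  rw [h σ]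
  refine mul_left_cancel₀ (Nat.cast_ne_zero.2 hn0 : (n : ℚ) ≠ 0) ?_
  have hσ : 0 < #σ.parts := card_pos.2 (σ.parts_nonempty (nonempty_Icc.2 hn).ne_empty)
  rw [← pow_succ', Nat.sub_add_cancel hσ, mul_sum, ← Nat.cast_pow,
    ← σ.sum_descFactorial_card_parts n]
  push_cast
  refine sum_congr rfl fun π _ => ?_
  split_ifs
  · exact Nat.cast_descFactorial_eq_mul_factorial_div hn0 (hcard π)
  · rw [mul_zero]
end

section
/- Let n ≥ 2 and let π be a partition of {2,...,n} in which n and n-1 lie in the same block B₁, say π = {B₁,...,B_k}. For a labelled tree T on [n] with φ(T) = π, the vertices n and n-1 are adjacent in T, and contracting the edge {n-1, n} (deleting label n) yields a tree T̃ on [n-1] with φ(T̃) equal either to {B₁∖{n}, B₂,...,B_k} or to {B₁ ∪ B_j ∖ {n}, and the remaining blocks B_i (i ≠ 1, j)} for some 2 ≤ j ≤ k; this contraction map is a bijection from φ⁻¹(π) onto the disjoint union of the preimages φ⁻¹(π̃_j), j = 1,...,k, where π̃_1 = {B₁∖{n}, B₂,...,B_k} and π̃_j = {B₁ ∪ B_j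 ∖{n}} ∪ {B_i : i ≠ 1, j} for j ≥ 2. -/
open Finset Nat

/-- Contraction of the edge `{n-1, n}` in a labelled tree on `[n]` (given by its parent
function `p`, where the vertex `n-1` has parent `n`): the merged vertex is relabelled
`n-1`, it receives the old parent of `n`, and the old children of `n` become children of
`n-1`. -/
def contract (n : ℕ) (p : ℕ → ℕ) : ℕ → ℕ := fun v =>
  if 2 ≤ v ∧ v ≤ n - 1 then
    (if v = n - 1 then p n else if p v = n then n - 1 else p v)
  else v

/-! In a tree with `φ(T) = π`, the block `B₁` containing `n` is the set of labels of the edges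
with head `n`; as `n - 1 ∈ B₁`, the edge labelled `n - 1` is `{n - 1, n}`. Contracting it turns
the heads `n` into `n - 1` and keeps every other head, so `B₁ ∖ {n}` merges with the block of
edges with head `n - 1` (when there is one) and the other blocks survive. Splitting `n - 1` again
and reattaching to `n` exactly the children whose labels lie in `B₁` inverts the contraction.
Both operations preserve being a tree because each step towards the root in one tree becomes at
most two steps in the other. -/

theorem exists_iterate_eq_of_forall_exists_iterate {α : Type*} {f g σ : α → α}
    (hσ : ∀ v, ∃ j, g^[j] (σ v) = σ (f v)) (k : ℕ) (v : α) :
    ∃ m, g^[m] (σ v) = σ (f^[k] v) := by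
  induction k generalizing v with
  | zero => exact ⟨0, rfl⟩
  | succ k ih =>
    obtain ⟨j, hj⟩ := hσ v
    obtain ⟨m, hm⟩ := ih (f v)
    exact ⟨m + j, by rw [Function.iterate_add_apply, hj, hm, Function.iterate_succ_apply]⟩

namespace Finpartition

variable {α : Type*} [DecidableEq α] {s t : Finset α} {x : α} (π : Finpartition s)
  {ρ : Finpartition t} {B C : Finset α}

theorem parts_eq_image_part : π.parts = s.image π.part := by
  ext b
  refine ⟨fun hb => ?_, fun hb => ?_⟩
  · obtain ⟨a, ha, rfl⟩ := π.part_surjOn hb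
    exact mem_image_of_mem _ ha
  · obtain ⟨a, ha, rfl⟩ := mem_image.1 hb
    exact π.part_mem.2 ha

theorem part_mem_erase_erase {w : α} (hws : w ∈ s) (hwBC : w ∉ B ∪ C) :
    π.part w ∈ (π.parts.erase B).erase C := by
  have hne : ∀ {D}, D ⊆ B ∪ C → π.part w ≠ D := fun hD he =>
    hwBC (hD (he ▸ π.mem_part_self.2 hws))
  exact mem_erase.2 ⟨hne subset_union_right, mem_erase.2 ⟨hne subset_union_left, π.part_mem.2 hws⟩⟩

theorem part_eq_ite_of_parts_eq_insert
    (hρ : ρ.parts = insert ((B ∪ C).erase x) ((π.parts.erase B).erase C)) {w : α}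
    (hws : w ∈ s) (hwx : w ≠ x) :
    ρ.part w = if w ∈ B ∪ C then (B ∪ C).erase x else π.part w := by
  split_ifs with hwBC
  · exact ρ.part_eq_of_mem (hρ ▸ mem_insert_self _ _) (mem_erase.2 ⟨hwx, hwBC⟩)
  · exact ρ.part_eq_of_mem (hρ ▸ mem_insert_of_mem (π.part_mem_erase_erase hws hwBC))
      (π.mem_part_self.2 hws)

theorem mem_part_iff_of_parts_eq_insert
    (hρ : ρ.parts = insert ((B ∪ C).erase x) ((π.parts.erase B).erase C)) (hxB : x ∈ B)
    (hC : C = ∅ ∨ C ∈ π.parts) {v w : α} (hws : w ∈ s) (hvB : v ∉ B) (hwB : w ∉ B) :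
    v ∈ ρ.part w ↔ v ∈ π.part w := by
  rw [π.part_eq_ite_of_parts_eq_insert hρ hws (ne_of_mem_of_not_mem hxB hwB).symm]
  split_ifs with hwBC
  · have hwC : w ∈ C := (mem_union.1 hwBC).resolve_left hwB
    have hCπ : C ∈ π.parts := hC.resolve_left (ne_empty_of_mem hwC)
    rw [π.part_eq_of_mem hCπ hwC, mem_erase, mem_union, or_iff_right hvB]
    exact and_iff_right (ne_of_mem_of_not_mem hxB hvB).symm
  · rfl

theorem parts_eq_insert_of_part_eq_ite (hts : t = s.erase x) (hB : B ∈ π.parts) (hxB : x ∈ B)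
    (hC : C = ∅ ∨ C ∈ π.parts) (hBC : ((B ∪ C).erase x).Nonempty)
    (h : ∀ w ∈ t, ρ.part w = if w ∈ B ∪ C then (B ∪ C).erase x else π.part w) :
    ρ.parts = insert ((B ∪ C).erase x) ((π.parts.erase B).erase C) := by
  subst hts
  rw [parts_eq_image_part, image_congr h]
  ext b
  simp only [mem_image, mem_insert]
  constructor
  · rintro ⟨w, hw, rfl⟩
    split_ifs with hwBC
    · exact Or.inl rfl
    · exact Or.inr (π.part_mem_erase_erase (mem_of_mem_erase hw) hwBC)
  · rintro (rfl | hb)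
    · obtain ⟨w, hw⟩ := hBC
      have hCs : C ⊆ s := hC.elim (fun e => e ▸ empty_subset s) π.le
      refine ⟨w, mem_erase.2 ⟨ne_of_mem_erase hw, union_subset (π.le hB) hCs ?_⟩, if_pos ?_⟩ <;>
        exact mem_of_mem_erase hw
    · obtain ⟨hbC, hb⟩ := mem_erase.1 hb
      obtain ⟨hbB, hb⟩ := mem_erase.1 hb
      obtain ⟨w, hw⟩ := π.nonempty_of_mem_parts hb
      have hwB : w ∉ B := fun h => hbB (π.eq_of_mem_parts hb hB hw h)
      have hwC : w ∉ C := fun h => hC.elim (fun e => notMem_empty w (e ▸ h))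
        fun hC => hbC (π.eq_of_mem_parts hb hC hw h)
      refine ⟨w, mem_erase.2 ⟨(ne_of_mem_of_not_mem hxB hwB).symm, π.le hb hw⟩, ?_⟩
      rw [if_neg (notMem_union.2 ⟨hwB, hwC⟩), π.part_eq_of_mem hb hw]

theorem exists_parts_eq_insert_iff :
    (∃ C, (C = ∅ ∨ C ∈ π.parts ∧ C ≠ B) ∧
        ρ.parts = insert ((B ∪ C).erase x) ((π.parts.erase B).erase C)) ↔
      (ρ.parts = insert (B.erase x) (π.parts.erase B) ∨
        ∃ C ∈ π.parts, C ≠ B ∧ ρ.parts = insert ((B ∪ C).erase x) ((π.parts.erase B).erase C)) := by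
  have hempty : ∅ ∉ π.parts.erase B := fun h => π.empty_notMem_parts (mem_of_mem_erase h)
  constructor
  · rintro ⟨C, rfl | ⟨hC, hCB⟩, h⟩
    · rw [union_empty, erase_eq_of_notMem hempty] at h
      exact Or.inl h
    · exact Or.inr ⟨C, hC, hCB, h⟩
  · rintro (h | ⟨C, hC, hCB, h⟩)
    · exact ⟨∅, Or.inl rfl, by rwa [union_empty, erase_eq_of_notMem hempty]⟩
    · exact ⟨C, Or.inr ⟨hC, hCB⟩, h⟩

end Finpartition

theorem Icc_sub_one_eq_erase (n : ℕ) : Icc 2 (n - 1) = (Icc 2 n).erase n := by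
  ext v
  simp only [mem_Icc, mem_erase]
  omega

theorem phiEq_iff_mem_part {m : ℕ} {p : ℕ → ℕ} {π : Finpartition (Icc 2 m)} :
    phiEq m p π ↔ ∀ v ∈ Icc 2 m, ∀ w ∈ Icc 2 m, v ∈ π.part w ↔ head p v = head p w := by
  simp only [phiEq, Finpartition.mem_part_iff_exists]

theorem part_eq_filter_of_phiEq {m : ℕ} {p : ℕ → ℕ} {π : Finpartition (Icc 2 m)}
    (h : phiEq m p π) {w : ℕ} (hw : w ∈ Icc 2 m) :
    π.part w = {v ∈ Icc 2 m | head p v = head p w} := by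
  ext v
  rw [mem_filter]
  exact ⟨fun hv => ⟨π.part_subset w hv, (phiEq_iff_mem_part.1 h v (π.part_subset w hv) w hw).1 hv⟩,
    fun hv => (phiEq_iff_mem_part.1 h v hv.1 w hw).2 hv.2⟩

theorem exists_phiEq (m : ℕ) (p : ℕ → ℕ) : ∃ ρ, phiEq m p ρ := by
  classical
  refine ⟨.ofSetSetoid (Setoid.ker (head p)) (Icc 2 m), phiEq_iff_mem_part.2 fun v hv w hw => ?_⟩
  rw [Finpartition.mem_part_ofSetSetoid_iff_rel, Setoid.ker_def]
  simp [hv, hw, eq_comm]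

namespace IsLabelledTree

variable {n : ℕ} {p : ℕ → ℕ}

theorem head_self (ht : IsLabelledTree n p) (hn : 2 ≤ n) : head p n = n := by
  have := ht.1 n hn le_rfl
  simp only [head]; omega

theorem head_le (ht : IsLabelledTree n p) {v : ℕ} (hv : v ∈ Icc 2 n) : head p v ≤ n := by
  rw [mem_Icc] at hv
  have := ht.1 v hv.1 hv.2
  simp only [head]; omega

theorem apply_apply_ne (ht : IsLabelledTree n p) {u : ℕ} (hu : u ∈ Icc 2 n) : p (p u) ≠ u := by
  intro hpp
  rw [mem_Icc] at hu
  have hp1 : p 1 = 1 := ht.2.2 1 (by omega)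
  have hpu : p u ≠ 1 := fun h => by rw [h, hp1] at hpp; omega
  have horbit : ∀ k, p^[k] u = u ∨ p^[k] u = p u := by
    intro k
    induction k with
    | zero => exact Or.inl rfl
    | succ k ih =>
      rw [Function.iterate_succ_apply']
      rcases ih with h | h <;> rw [h]
      exacts [Or.inr rfl, Or.inl hpp]
  obtain ⟨k, hk⟩ := ht.2.1 u hu.1 hu.2
  rcases horbit k with h | h <;> rw [h] at hk
  exacts [by omega, hpu hk]

end IsLabelledTree

section contract

variable {n : ℕ} {p : ℕ → ℕ}

theorem head_contract (ht : IsLabelledTree n p) {v : ℕ} (hv : v ∈ Icc 2 (n - 1)) :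
    head (contract n p) v = if head p v = n then n - 1 else head p v := by
  rw [mem_Icc] at hv
  have hpv := ht.1 v hv.1 (by omega)
  have hpn' := ht.1 n (by omega) le_rfl
  simp only [head, contract, if_pos hv, max_def]
  split_ifs <;> omega

theorem IsLabelledTree.contract (hn : 3 ≤ n) (ht : IsLabelledTree n p) (hp : p (n - 1) = n) :
    IsLabelledTree (n - 1) (contract n p) := by
  have hpn : p n ≠ n - 1 := by
    simpa [hp] using ht.apply_apply_ne (u := n - 1) (mem_Icc.2 ⟨by omega, by omega⟩)
  have hpn' := ht.1 n (by omega) le_rfl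
  refine ⟨fun v hv2 hvn => ?_, fun v hv2 hvn => ?_, fun v hv => if_neg hv⟩
  · have hpv := ht.1 v hv2 (by omega)
    simp only [_root_.contract, if_pos (And.intro hv2 hvn)]
    split_ifs <;> omega
  · set σ : ℕ → ℕ := fun u => if u = n then n - 1 else u
    have hσ : ∀ u, ∃ j, (_root_.contract n p)^[j] (σ u) = σ (p u) := by
      intro u
      by_cases hu : 2 ≤ u ∧ u ≤ n
      · have hpu := ht.1 u hu.1 hu.2
        by_cases hun : u = n - 1
        · exact ⟨0, by simp [σ, hun, hp]⟩
        · refine ⟨1, ?_⟩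
          obtain rfl | hun' := eq_or_ne u n <;>
            simp only [σ, Function.iterate_one, _root_.contract] <;> split_ifs <;> omega
      · exact ⟨0, by rw [ht.2.2 u hu]; rfl⟩
    obtain ⟨k, hk⟩ := ht.2.1 v hv2 (by omega)
    obtain ⟨m, hm⟩ := exists_iterate_eq_of_forall_exists_iterate hσ k v
    refine ⟨m, ?_⟩
    simpa [σ, hk, show v ≠ n by omega, show 1 ≠ n by omega] using hm

end contract

/-- Inverse of `contract n`: the vertex `n - 1` is split into a new vertex `n`, which takes over
its parent, and its child `n - 1`; the children of `n - 1` with labels in `B` move to `n`. -/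
def splitVertex (n : ℕ) (B : Finset ℕ) (q : ℕ → ℕ) : ℕ → ℕ := fun v =>
  if 2 ≤ v ∧ v ≤ n then
    (if v = n then q (n - 1) else if v = n - 1 then n
     else if q v = n - 1 ∧ v ∈ B then n else q v)
  else v

section splitVertex

variable {n : ℕ} {B : Finset ℕ} {q : ℕ → ℕ}

theorem IsLabelledTree.splitVertex (hn : 3 ≤ n) (ht : IsLabelledTree (n - 1) q) :
    IsLabelledTree n (splitVertex n B q) := by
  have hqn := ht.1 (n - 1) (by omega) le_rfl
  refine ⟨fun v hv2 hvn => ?_, fun v hv2 hvn => ?_, fun v hv => if_neg hv⟩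
  · simp only [_root_.splitVertex, if_pos (And.intro hv2 hvn)]
    obtain rfl | hv := eq_or_ne v n
    · simp only [if_true]; omega
    · have hqv := ht.1 v hv2 (by omega)
      split_ifs <;> omega
  · -- `σ` sends the merged vertex `n - 1` of `q` to `n`, the copy that keeps its parent.
    set σ : ℕ → ℕ := fun u => if u = n - 1 then n else u
    have hσ : ∀ u, ∃ j, (_root_.splitVertex n B q)^[j] (σ u) = σ (q u) := by
      intro u
      by_cases hu : 2 ≤ u ∧ u ≤ n - 1
      · have hqu := ht.1 u hu.1 hu.2
        obtain rfl | hun := eq_or_ne u (n - 1)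
        · refine ⟨1, ?_⟩
          simp [σ, _root_.splitVertex, hqu.2.2, show 2 ≤ n by omega]
        by_cases h : q u = n - 1 ∧ u ∉ B
        · refine ⟨2, ?_⟩
          simp [σ, _root_.splitVertex, h, hun, show u ≠ n by omega, hu.1, show u ≤ n by omega,
            show 2 ≤ n - 1 by omega, show n - 1 ≠ n by omega]
        · refine ⟨1, ?_⟩
          simp only [σ, _root_.splitVertex, Function.iterate_one, hun, hu.1, show u ≤ n by omega,
            show u ≠ n by omega, and_self, ↓reduceIte]
          split_ifs <;> tauto
      · exact ⟨0, by rw [ht.2.2 u hu]; rfl⟩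
    have hreach : ∀ u, 2 ≤ u → u ≤ n - 1 → ∃ m, (_root_.splitVertex n B q)^[m] (σ u) = 1 := by
      intro u hu2 hun
      obtain ⟨k, hk⟩ := ht.2.1 u hu2 hun
      obtain ⟨m, hm⟩ := exists_iterate_eq_of_forall_exists_iterate hσ k u
      exact ⟨m, by simpa [σ, hk, show 1 ≠ n - 1 by omega] using hm⟩
    obtain hv | rfl | rfl : v ≤ n - 2 ∨ v = n - 1 ∨ v = n := by omega
    · simpa [σ, show v ≠ n - 1 by omega] using hreach v hv2 (by omega)
    · obtain ⟨m, hm⟩ := hreach (n - 1) (by omega) le_rfl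
      refine ⟨m + 1, ?_⟩
      rw [Function.iterate_succ_apply]
      simpa [σ, _root_.splitVertex, show n - 1 ≠ n by omega, show 2 ≤ n - 1 by omega] using hm
    · simpa [σ] using hreach (v - 1) (by omega) le_rfl

theorem contract_splitVertex (ht : IsLabelledTree (n - 1) q) :
    contract n (splitVertex n B q) = q := by
  funext v
  by_cases hv : 2 ≤ v ∧ v ≤ n - 1
  · have hqv := ht.1 v hv.1 hv.2
    obtain rfl | hvn := eq_or_ne v (n - 1)
    · simp [contract, splitVertex, hv, show 2 ≤ n by omega]
    · simp only [contract, splitVertex, if_pos hv]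
      split_ifs <;> omega
  · rw [contract, if_neg hv, ht.2.2 v hv]

theorem splitVertex_contract {p : ℕ → ℕ} (hn : 3 ≤ n) (ht : IsLabelledTree n p)
    (hp : p (n - 1) = n) (hB : B = {v ∈ Icc 2 n | head p v = n}) :
    splitVertex n B (contract n p) = p := by
  funext v
  by_cases hv : 2 ≤ v ∧ v ≤ n
  · have hpv := ht.1 v hv.1 hv.2
    obtain rfl | rfl | hvn : v = n ∨ v = n - 1 ∨ v ≤ n - 2 := by omega
    · simp [contract, splitVertex, hv, show 2 ≤ v - 1 by omega]
    · simp [splitVertex, hv, hp, show n - 1 ≠ n by omega]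
    · have hvB : v ∈ B ↔ p v = n := by rw [hB, mem_filter, mem_Icc, head]; omega
      simp only [contract, splitVertex, if_pos hv, hvB]
      split_ifs <;> omega
  · rw [splitVertex, if_neg hv, ht.2.2 v hv]

theorem head_splitVertex (hn : 3 ≤ n)
    (hq : IsLabelledTree (n - 1) q) (hnB : n ∈ B) (hn1B : n - 1 ∈ B)
    (hqB : ∀ v ∈ B, v ≤ n - 2 → q v = n - 1) {v : ℕ} (hv : v ∈ Icc 2 n) :
    head (splitVertex n B q) v = if v ∈ B then n else head q v := by
  rw [mem_Icc] at hv
  have hqn := hq.1 (n - 1) (by omega) le_rfl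
  obtain rfl | rfl | hvn : v = n ∨ v = n - 1 ∨ v ≤ n - 2 := by omega
  · simp only [head, splitVertex, hv, and_self, ↓reduceIte, hnB, sup_eq_left]
    omega
  · simp [head, splitVertex, hv, hn1B, show n - 1 ≠ n by omega]
  · have hqv := hq.1 v hv.1 (by omega)
    by_cases hvB : v ∈ B
    · simp [head, splitVertex, hv, hvB, hqB v hvB hvn, show v ≠ n by omega,
        show v ≠ n - 1 by omega]
    · simp [head, splitVertex, hv, hvB, show v ≠ n by omega, show v ≠ n - 1 by omega]

end splitVertex

section phiEq

variable {n : ℕ} {π : Finpartition (Icc 2 n)} {B₁ : Finset ℕ} {p : ℕ → ℕ}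

theorem eq_filter_head_of_phiEq (ht : IsLabelledTree n p) (hφ : phiEq n p π)
    (hB₁ : B₁ ∈ π.parts) (hnB : n ∈ B₁) : B₁ = {v ∈ Icc 2 n | head p v = n} := by
  have hn : n ∈ Icc 2 n := π.le hB₁ hnB
  rw [← π.part_eq_of_mem hB₁ hnB, part_eq_filter_of_phiEq hφ hn,
    ht.head_self (mem_Icc.1 hn).1]

theorem IsLabelledTree.apply_pred_eq_of_phiEq (ht : IsLabelledTree n p) (hφ : phiEq n p π)
    (hB₁ : B₁ ∈ π.parts) (hnB : n ∈ B₁) (hn1B : n - 1 ∈ B₁) : p (n - 1) = n := by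
  rw [eq_filter_head_of_phiEq ht hφ hB₁ hnB, mem_filter, mem_Icc] at hn1B
  have := ht.1 (n - 1) hn1B.1.1 hn1B.1.2
  simp only [head] at hn1B
  omega

theorem exists_phiEq_contract (ht : IsLabelledTree n p) (hφ : phiEq n p π)
    (hB₁ : B₁ ∈ π.parts) (hnB : n ∈ B₁) (hn1B : n - 1 ∈ B₁) :
    ∃ ρ, phiEq (n - 1) (contract n p) ρ ∧ ∃ C, (C = ∅ ∨ C ∈ π.parts ∧ C ≠ B₁) ∧
      ρ.parts = insert ((B₁ ∪ C).erase n) ((π.parts.erase B₁).erase C) := by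
  have hn : 3 ≤ n := by have := mem_Icc.1 (π.le hB₁ hn1B); omega
  have hB₁eq := eq_filter_head_of_phiEq ht hφ hB₁ hnB
  set C : Finset ℕ := {v ∈ Icc 2 n | head p v = n - 1}
  have hn1C : n - 1 ∉ C := fun h => by
    rw [hB₁eq, mem_filter] at hn1B
    have := (mem_filter.1 h).2
    omega
  have hC : C = ∅ ∨ C ∈ π.parts ∧ C ≠ B₁ := by
    refine or_iff_not_imp_left.2 fun hCne => ?_
    obtain ⟨u, hu⟩ := nonempty_iff_ne_empty.2 hCne
    have hCu : C = π.part u := by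
      rw [part_eq_filter_of_phiEq hφ (mem_filter.1 hu).1, (mem_filter.1 hu).2]
    exact ⟨hCu ▸ π.part_mem.2 (mem_filter.1 hu).1, fun h => hn1C (h ▸ hn1B)⟩
  obtain ⟨ρ, hρ⟩ := exists_phiEq (n - 1) (contract n p)
  refine ⟨ρ, hρ, C, hC, π.parts_eq_insert_of_part_eq_ite (Icc_sub_one_eq_erase n) hB₁ hnB
    (hC.imp_right And.left) ⟨n - 1, mem_erase.2 ⟨by omega, mem_union_left _ hn1B⟩⟩
    fun w hw => ?_⟩
  have hwn : w ∈ Icc 2 n := Icc_subset_Icc_right (Nat.sub_le n 1) hw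
  rw [part_eq_filter_of_phiEq hρ hw, part_eq_filter_of_phiEq hφ hwn, hB₁eq]
  ext v
  have := ht.head_le hwn
  by_cases hv : v ∈ Icc 2 (n - 1)
  · have := ht.head_le (Icc_subset_Icc_right (Nat.sub_le n 1) hv)
    split_ifs with hwBC <;>
      simp only [mem_filter, mem_union, mem_erase, C, head_contract ht hv, head_contract ht hw,
        mem_Icc] at hv hwn hwBC ⊢ <;>
      split_ifs <;> omega
  · have hvn : v ∈ Icc 2 n → head p v = n := fun hvn => by
      obtain rfl : v = n := by rw [mem_Icc] at hv hvn; omega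
      exact ht.head_self (by omega)
    split_ifs with hwBC <;>
      simp only [mem_filter, mem_union, mem_erase, C, mem_Icc] at hv hvn hwn hwBC ⊢ <;>
      omega

theorem phiEq_splitVertex {C : Finset ℕ} {q : ℕ → ℕ} {ρ : Finpartition (Icc 2 (n - 1))}
    (hq : IsLabelledTree (n - 1) q) (hρ : phiEq (n - 1) q ρ)
    (hB₁ : B₁ ∈ π.parts) (hnB : n ∈ B₁) (hn1B : n - 1 ∈ B₁) (hC : C = ∅ ∨ C ∈ π.parts)
    (hparts : ρ.parts = insert ((B₁ ∪ C).erase n) ((π.parts.erase B₁).erase C)) :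
    phiEq n (splitVertex n B₁ q) π := by
  have hn : 3 ≤ n := by have := mem_Icc.1 (π.le hB₁ hn1B); omega
  have hn1 : n - 1 ∈ Icc 2 (n - 1) := mem_Icc.2 ⟨by omega, le_rfl⟩
  have hmem : ∀ v ∈ Icc 2 n, v ∉ B₁ → v ∈ Icc 2 (n - 1) := fun v hv hvB => by
    have := ne_of_mem_of_not_mem hnB hvB
    rw [mem_Icc] at hv ⊢
    omega
  have hqB : ∀ v ∈ B₁, v ≤ n - 2 → q v = n - 1 := by
    intro v hvB hvn
    have hv : v ∈ ρ.part (n - 1) := by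
      rw [π.part_eq_ite_of_parts_eq_insert hparts (π.le hB₁ hn1B) (by omega),
        if_pos (mem_union_left _ hn1B)]
      exact mem_erase.2 ⟨by omega, mem_union_left _ hvB⟩
    rw [part_eq_filter_of_phiEq hρ hn1, mem_filter, hq.head_self (by omega), head, mem_Icc] at hv
    have := hq.1 v hv.1.1 hv.1.2
    omega
  rw [phiEq_iff_mem_part]
  intro v hv w hw
  rw [head_splitVertex hn hq hnB hn1B hqB hv, head_splitVertex hn hq hnB hn1B hqB hw]
  by_cases hwB : w ∈ B₁
  · rw [π.part_eq_of_mem hB₁ hwB, if_pos hwB]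
    by_cases hvB : v ∈ B₁
    · simp [hvB]
    · have := hq.head_le (hmem v hv hvB)
      simp only [hvB, if_false, false_iff]
      omega
  · have hw' := hmem w hw hwB
    have := hq.head_le hw'
    rw [if_neg hwB]
    by_cases hvB : v ∈ B₁
    · have hvw : v ∉ π.part w := fun h =>
        hwB (π.eq_of_mem_parts (π.part_mem.2 hw) hB₁ h hvB ▸ π.mem_part_self.2 hw)
      simp only [hvB, hvw, if_true, false_iff]
      omega
    · rw [if_neg hvB, ← π.mem_part_iff_of_parts_eq_insert hparts hnB hC hw hvB hwB,
        part_eq_filter_of_phiEq hρ hw', mem_filter, and_iff_right (hmem v hv hvB)]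

end phiEq

theorem contraction_bijection_general (n : ℕ) (π : Finpartition (Finset.Icc 2 n))
    (B₁ : Finset ℕ) (hB₁ : B₁ ∈ π.parts) (hnB : n ∈ B₁) (hn1B : n - 1 ∈ B₁) :
    (∀ p : ℕ → ℕ, IsLabelledTree n p → phiEq n p π → (p (n - 1) = n ∨ p n = n - 1)) ∧
    Set.BijOn (contract n)
      {p : ℕ → ℕ | IsLabelledTree n p ∧ phiEq n p π}
      {q : ℕ → ℕ | IsLabelledTree (n - 1) q ∧
        ∃ ρ : Finpartition (Finset.Icc 2 (n - 1)), phiEq (n - 1) q ρ ∧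
          (ρ.parts = insert (B₁.erase n) (π.parts.erase B₁) ∨
            ∃ Bj ∈ π.parts, Bj ≠ B₁ ∧
              ρ.parts = insert ((B₁ ∪ Bj).erase n) ((π.parts.erase B₁).erase Bj))} := by
  have hn : 3 ≤ n := by have := mem_Icc.1 (π.le hB₁ hn1B); omega
  have hp : ∀ p, IsLabelledTree n p → phiEq n p π → p (n - 1) = n := fun p ht hφ =>
    ht.apply_pred_eq_of_phiEq hφ hB₁ hnB hn1B
  have hsplit : ∀ p, IsLabelledTree n p → phiEq n p π → splitVertex n B₁ (contract n p) = p :=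
    fun p ht hφ => splitVertex_contract hn ht (hp p ht hφ) (eq_filter_head_of_phiEq ht hφ hB₁ hnB)
  refine ⟨fun p ht hφ => Or.inl (hp p ht hφ), ?_, ?_, ?_⟩
  · rintro p ⟨ht, hφ⟩
    obtain ⟨ρ, hρ, hparts⟩ := exists_phiEq_contract ht hφ hB₁ hnB hn1B
    exact ⟨ht.contract hn (hp p ht hφ), ρ, hρ, π.exists_parts_eq_insert_iff.1 hparts⟩
  · rintro p₁ ⟨ht₁, hφ₁⟩ p₂ ⟨ht₂, hφ₂⟩ h
    rw [← hsplit p₁ ht₁ hφ₁, h, hsplit p₂ ht₂ hφ₂]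
  · rintro q ⟨hq, ρ, hρ, hparts⟩
    obtain ⟨C, hC, hparts⟩ := π.exists_parts_eq_insert_iff.2 hparts
    exact ⟨splitVertex n B₁ q, ⟨hq.splitVertex hn,
      phiEq_splitVertex hq hρ hB₁ hnB hn1B (hC.imp_right And.left) hparts⟩, contract_splitVertex hq⟩

/-- Let `n ≥ 2` and let `π = {B₁,…,B_k}` be a partition of `{2,…,n}` in which `n` and
`n-1` lie in the same block `B₁`.  For every labelled tree `T` on `[n]` with `φ(T) = π`
the vertices `n` and `n-1` are adjacent, and contracting the edge `{n-1,n}` (deleting the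
label `n`) is a bijection from `φ⁻¹(π)` onto the (disjoint) union of the sets `φ⁻¹(π̃_j)`,
`j = 1,…,k`, of labelled trees on `[n-1]`, where `π̃₁ = {B₁∖{n}, B₂,…,B_k}` and, for
`j ≥ 2`, `π̃_j = {B₁ ∪ B_j ∖ {n}} ∪ {B_i : i ≠ 1, j}`. -/
theorem contraction_bijection (n : ℕ) (hn : 2 ≤ n) (π : Finpartition (Finset.Icc 2 n))
    (B₁ : Finset ℕ) (hB₁ : B₁ ∈ π.parts) (hnB : n ∈ B₁) (hn1B : n - 1 ∈ B₁) :
    (∀ p : ℕ → ℕ, IsLabelledTree n p → phiEq n p π → (p (n - 1) = n ∨ p n = n - 1)) ∧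
    Set.BijOn (contract n)
      {p : ℕ → ℕ | IsLabelledTree n p ∧ phiEq n p π}
      {q : ℕ → ℕ | IsLabelledTree (n - 1) q ∧
        ∃ ρ : Finpartition (Finset.Icc 2 (n - 1)), phiEq (n - 1) q ρ ∧
          (ρ.parts = insert (B₁.erase n) (π.parts.erase B₁) ∨
            ∃ Bj ∈ π.parts, Bj ≠ B₁ ∧
              ρ.parts = insert ((B₁ ∪ Bj).erase n) ((π.parts.erase B₁).erase Bj))} :=
  contraction_bijection_general n π B₁ hB₁ hnB hn1B
end

section
/- Summing Cotterill's formula over all partitions λ of n-1 recovers Cayley's formula: Σ_{λ ⊢ n-1} (n-1)!²/((n-k(λ))! · Π_i i!^{m_i(λ)} m_i(λ)!) = n^{n-2}, where k(λ) is the number of parts of λ and m_i(λ) is the number of parts equal to i. -/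
/-!
Expanding `n ^ (n - 1) = (1 + ⋯ + 1) ^ (n - 1)` by the multinomial theorem gives the sum of the
multinomial coefficients of all `k : Fin n → ℕ` with `∑ i, k i = n - 1`. Group these exponent
vectors by the partition `λ` formed by their nonzero entries: there are
`n! / ((n - k(λ))! ∏ i, m_i(λ)!)` of them, each with multinomial coefficient
`(n - 1)! / ∏ i, i! ^ m_i(λ)`, so the group of `λ` contributes `n` times Cotterill's term.
-/

open Finset Nat

namespace Multiset
variable {β : Type*}

theorem map_univ_val_fin_cons {n : ℕ} (b : β) (g : Fin n → β) :
    univ.val.map (Fin.cons b g : Fin (n + 1) → β) = b ::ₘ univ.val.map g := by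
  simp [List.ofFn_succ]

theorem mem_of_map_univ_val_eq {n : ℕ} {f : Fin n → β} {t : Multiset β}
    (hf : univ.val.map f = t) (i : Fin n) : f i ∈ t :=
  hf ▸ mem_map_of_mem f (mem_univ_val i)

variable [DecidableEq β]

theorem map_univ_val_fin_tail {n : ℕ} (f : Fin (n + 1) → β) :
    univ.val.map (Fin.tail f) = (univ.val.map f).erase (f 0) := by
  conv_rhs => rw [← Fin.cons_self_tail f, map_univ_val_fin_cons]
  simp

theorem prod_factorial_count_eq_count_mul_erase {t : Multiset β} {s : Finset β} {b : β}
    (hbt : b ∈ t) (hbs : b ∈ s) :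
    ∏ c ∈ s, (t.count c)! = t.count b * ∏ c ∈ s, ((t.erase b).count c)! := by
  rw [← mul_prod_erase s _ hbs, ← mul_prod_erase s (fun c => ((t.erase b).count c)!) hbs,
    ← mul_assoc, count_erase_self, mul_factorial_pred (count_ne_zero.2 hbt)]
  congr 1
  exact prod_congr rfl fun c hc => by rw [count_erase_of_ne (ne_of_mem_erase hc)]

def arrangementsSuccEquiv {n : ℕ} (t : Multiset β) :
    {f : Fin (n + 1) → β // univ.val.map f = t} ≃
      Σ b : t.toFinset, {g : Fin n → β // univ.val.map g = t.erase b} where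
  toFun f := ⟨⟨f.1 0, mem_toFinset.2 (mem_of_map_univ_val_eq f.2 0)⟩,
    ⟨Fin.tail f.1, by rw [map_univ_val_fin_tail, f.2]⟩⟩
  invFun p := ⟨Fin.cons p.1.1 p.2.1, by
    rw [map_univ_val_fin_cons, p.2.2, cons_erase (mem_toFinset.1 p.1.2)]⟩
  left_inv f := Subtype.ext (Fin.cons_self_tail f.1)
  right_inv p := Sigma.subtype_ext rfl (Fin.tail_cons (α := fun _ => β) p.1.1 p.2.1)

instance finite_subtype_map_univ_val_eq {n : ℕ} (t : Multiset β) :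
    Finite {f : Fin n → β // univ.val.map f = t} :=
  Finite.of_injective
    (fun f i => (⟨f.1 i, mem_toFinset.2 (mem_of_map_univ_val_eq f.2 i)⟩ : t.toFinset))
    fun _ _ h => Subtype.ext <| funext fun i => congrArg Subtype.val (congrFun h i)

theorem natCard_arrangements_mul_prod_factorial_count {n : ℕ} {t : Multiset β} (ht : card t = n)
    {s : Finset β} (hs : t.toFinset ⊆ s) :
    Nat.card {f : Fin n → β // univ.val.map f = t} * ∏ b ∈ s, (t.count b)! = n ! := by
  induction n generalizing t with
  | zero =>
    obtain rfl := card_eq_zero.1 ht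
    simp
  | succ n ih =>
    have term : ∀ b ∈ t.toFinset,
        Nat.card {g : Fin n → β // univ.val.map g = t.erase b} * ∏ c ∈ s, (t.count c)! =
          t.count b * n ! := by
      intro b hb
      have hbt := mem_toFinset.1 hb
      rw [prod_factorial_count_eq_count_mul_erase hbt (hs hb), mul_left_comm,
        ih (by simp [card_erase_of_mem hbt, ht])
          ((toFinset_subset.2 (erase_subset b t)).trans hs)]
    rw [Nat.card_congr (arrangementsSuccEquiv t), Nat.card_sigma, sum_mul,
      Finset.sum_coe_sort t.toFinset fun b =>
        Nat.card {g : Fin n → β // univ.val.map g = t.erase b} * ∏ c ∈ s, (t.count c)!,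
      sum_congr rfl term, ← sum_mul, toFinset_sum_count_eq, ht, factorial_succ]

end Multiset

namespace Nat.Partition
variable {m : ℕ}

theorem card_parts_le (lam : m.Partition) : lam.parts.card ≤ m := by
  simpa [lam.parts_sum] using Multiset.card_nsmul_le_sum (a := 1) fun _ h => lam.parts_pos h

/-- The multiset of entries of any `k : Fin n → ℕ` whose nonzero entries are the parts of
`lam`. -/
def padZeros (lam : m.Partition) (n : ℕ) : Multiset ℕ :=
  lam.parts + Multiset.replicate (n - lam.parts.card) 0

variable {n : ℕ}

theorem filter_ne_zero_padZeros (lam : m.Partition) :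
    (lam.padZeros n).filter (· ≠ 0) = lam.parts := by
  rw [padZeros, Multiset.filter_add, Multiset.filter_eq_self.2 fun _ h => (lam.parts_pos h).ne',
    Multiset.filter_eq_nil.2 fun _ h => by simp [Multiset.eq_of_mem_replicate h], add_zero]

theorem padZeros_injective : Function.Injective fun lam : m.Partition => lam.padZeros n :=
  fun lam mu h => Nat.Partition.ext <| by
    rw [← filter_ne_zero_padZeros (n := n) lam, ← filter_ne_zero_padZeros (n := n) mu]
    exact congrArg _ h

theorem padZeros_ofSums {l : Multiset ℕ} (hl : l.sum = m) (hn : l.card = n) :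
    (ofSums m l hl).padZeros n = l := by
  have hsplit := Multiset.filter_add_not (· = 0) l
  have hcard := congrArg Multiset.card hsplit
  rw [Multiset.card_add, Multiset.filter_eq', Multiset.card_replicate] at hcard
  rw [padZeros, ofSums_parts, ← hn, ← hcard, Nat.add_sub_cancel_right, ← Multiset.filter_eq',
    add_comm]
  exact hsplit

theorem sum_padZeros (lam : m.Partition) : (lam.padZeros n).sum = m := by
  simp [padZeros, lam.parts_sum]

theorem count_zero_padZeros (lam : m.Partition) :
    (lam.padZeros n).count 0 = n - lam.parts.card := by
  simp [padZeros, Multiset.count_eq_zero.2 fun h => (lam.parts_pos h).ne' rfl]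

theorem count_padZeros_of_ne_zero (lam : m.Partition) {i : ℕ} (hi : i ≠ 0) :
    (lam.padZeros n).count i = lam.parts.count i := by
  simp [padZeros, Multiset.count_replicate, hi.symm]

theorem card_padZeros (lam : m.Partition) (hmn : m ≤ n) : (lam.padZeros n).card = n := by
  have := lam.card_parts_le
  simp only [padZeros, Multiset.card_add, Multiset.card_replicate]
  omega

theorem toFinset_padZeros_subset (lam : m.Partition) (hmn : m ≤ n) :
    (lam.padZeros n).toFinset ⊆ insert 0 (Icc 1 n) := by
  intro i hi
  rw [Multiset.mem_toFinset, padZeros, Multiset.mem_add] at hi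
  rcases hi with hi | hi
  · exact mem_insert_of_mem (mem_Icc.2 ⟨lam.parts_pos hi, (le_of_mem_parts hi).trans hmn⟩)
  · exact mem_insert.2 (Or.inl (Multiset.eq_of_mem_replicate hi))

end Nat.Partition

theorem sum_multinomial_piAntidiag_univ_fin (n m : ℕ) :
    ∑ k ∈ piAntidiag (univ : Finset (Fin n)) m, multinomial univ k = n ^ m := by
  simpa only [Finset.sum_const, Finset.card_univ, Fintype.card_fin, smul_eq_mul, mul_one,
    one_pow, prod_const_one, Nat.cast_id] using
    (sum_pow_eq_sum_piAntidiag (univ : Finset (Fin n)) (fun _ => (1 : ℕ)) m).symm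

section Fibers
variable {m n : ℕ}

theorem sum_piAntidiag_univ_eq_sum_partition {M : Type*} [AddCommMonoid M]
    (f : (Fin n → ℕ) → M) :
    ∑ k ∈ piAntidiag univ m, f k =
      ∑ lam : m.Partition,
        ∑ k ∈ piAntidiag univ m with univ.val.map k = lam.padZeros n, f k := by
  symm
  rw [← sum_image (f := fun t => ∑ k ∈ piAntidiag univ m with univ.val.map k = t, f k)
    fun lam _ mu _ h => Nat.Partition.padZeros_injective h]
  refine sum_fiberwise_of_maps_to (fun k hk => ?_) f
  have hsum : (univ.val.map k).sum = m := (mem_piAntidiag.1 hk).1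
  exact mem_image.2 ⟨_, mem_univ _, Nat.Partition.padZeros_ofSums hsum (by simp)⟩

theorem card_filter_map_eq_padZeros_mul (lam : m.Partition) (hmn : m ≤ n) :
    #{k ∈ piAntidiag (univ : Finset (Fin n)) m | univ.val.map k = lam.padZeros n} *
      ((n - lam.parts.card)! * ∏ i ∈ Icc 1 n, (lam.parts.count i)!) = n ! := by
  have hfiber : ∀ k : Fin n → ℕ,
      k ∈ {k ∈ piAntidiag (univ : Finset (Fin n)) m | univ.val.map k = lam.padZeros n} ↔
        univ.val.map k = lam.padZeros n := fun k => by
    rw [mem_filter, mem_piAntidiag, and_iff_right_iff_imp]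
    exact fun h => ⟨by rw [← lam.sum_padZeros (n := n), ← h]; rfl, fun i _ => mem_univ i⟩
  rw [← Nat.subtype_card _ hfiber, ← lam.count_zero_padZeros,
    prod_congr rfl fun i hi => by
      rw [← lam.count_padZeros_of_ne_zero (n := n) (one_le_iff_ne_zero.1 (mem_Icc.1 hi).1)],
    ← prod_insert (f := fun i => ((lam.padZeros n).count i)!) (by simp)]
  exact Multiset.natCard_arrangements_mul_prod_factorial_count (lam.card_padZeros hmn)
    (lam.toFinset_padZeros_subset hmn)

theorem multinomial_mul_prod_factorial_pow_count (lam : m.Partition) (hmn : m ≤ n)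
    {k : Fin n → ℕ} (hk : univ.val.map k = lam.padZeros n) :
    multinomial univ k * ∏ i ∈ Icc 1 n, i ! ^ lam.parts.count i = m ! := by
  have hprod : ∏ i, (k i)! = ∏ i ∈ Icc 1 n, i ! ^ lam.parts.count i := by
    rw [prod_eq_multiset_prod, show univ.val.map (fun i => (k i)!) = (univ.val.map k).map (· !)
      from (Multiset.map_map _ _ _).symm, hk, prod_multiset_map_count,
      prod_subset (lam.toFinset_padZeros_subset hmn) fun i _ hi => by
        rw [Multiset.count_eq_zero.2 (Multiset.mem_toFinset.not.1 hi), pow_zero],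
      prod_insert (by simp), factorial_zero, one_pow, one_mul]
    exact prod_congr rfl fun i hi => by
      rw [lam.count_padZeros_of_ne_zero (one_le_iff_ne_zero.1 (mem_Icc.1 hi).1)]
  have hsum : ∑ i, k i = m := by
    rw [← lam.sum_padZeros (n := n), ← hk]; rfl
  rw [← hprod, mul_comm, multinomial_spec, hsum]

theorem sum_multinomial_filter_map_eq_padZeros_mul (lam : m.Partition) (hmn : m ≤ n) :
    (∑ k ∈ piAntidiag (univ : Finset (Fin n)) m with univ.val.map k = lam.padZeros n,
      multinomial univ k) *
      ((n - lam.parts.card)! * ∏ i ∈ Icc 1 n, i ! ^ lam.parts.count i * (lam.parts.count i)!) =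
      n ! * m ! := by
  rw [prod_mul_distrib, mul_left_comm _ (∏ i ∈ Icc 1 n, _), ← mul_assoc, sum_mul,
    sum_const_nat fun _ hk => multinomial_mul_prod_factorial_pow_count lam hmn (mem_filter.1 hk).2,
    mul_right_comm, card_filter_map_eq_padZeros_mul lam hmn]

end Fibers

/-- Summing Cotterill's formula over all partitions `λ` of `n-1` recovers Cayley's formula:
`Σ_{λ ⊢ n-1} (n-1)!² / ((n-k(λ))! · Π_i i!^{m_i(λ)} m_i(λ)!) = n^(n-2)`. -/
theorem sum_cotterill_eq_cayley (n : ℕ) (hn : 1 ≤ n) :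
    ∑ lam : Nat.Partition (n - 1),
        ((Nat.factorial (n - 1) : ℚ) * Nat.factorial (n - 1)) /
          ((Nat.factorial (n - lam.parts.card) : ℚ) *
            ∏ i ∈ Finset.Icc 1 n,
              (Nat.factorial i : ℚ) ^ (Multiset.count i lam.parts) *
                Nat.factorial (Multiset.count i lam.parts)) =
      (n : ℚ) ^ (n - 2) := by
  set m := n - 1 with hm
  have hterm : ∀ lam : m.Partition,
      ((m ! : ℚ) * m !) / ((n - lam.parts.card)! *
          ∏ i ∈ Icc 1 n, (i ! : ℚ) ^ lam.parts.count i * (lam.parts.count i)!) =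
        (∑ k ∈ piAntidiag (univ : Finset (Fin n)) m with univ.val.map k = lam.padZeros n,
          multinomial univ k : ℕ) / n := by
    intro lam
    have h := congrArg (Nat.cast : ℕ → ℚ)
      (sum_multinomial_filter_map_eq_padZeros_mul lam (sub_le n 1))
    have hfact : (n ! : ℚ) = n * m ! := by
      rw [hm]; exact_mod_cast (mul_factorial_pred (by omega)).symm
    push_cast at h
    rw [div_eq_div_iff (by positivity) (by positivity)]
    push_cast
    linear_combination -h - (m ! : ℚ) * hfact
  rw [sum_congr rfl fun lam _ => hterm lam, ← sum_div, ← Nat.cast_sum,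
    ← sum_piAntidiag_univ_eq_sum_partition, sum_multinomial_piAntidiag_univ_fin, Nat.cast_pow]
  obtain rfl | hn2 := hn.eq_or_lt
  · simp
  · rw [hm, show n - 1 = n - 2 + 1 by omega, pow_succ,
      mul_div_cancel_right₀ _ (Nat.cast_ne_zero.2 (by omega))]
end

section
/- Let n ≥ 2. The map φ is surjective onto set partitions of {2,...,n}, i.e., for every set partition π of {2,...,n} there exists at least one labelled tree T on [n] with φ(T) = π. -/
open Finset Nat

/-- The map `φ` is surjective onto set partitions of `{2,…,n}`: for every set partition `π`
of `{2,…,n}` there exists at least one labelled tree `T` on `[n]` with `φ(T) = π`. -/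
theorem phi_surjective (n : ℕ) (hn : 2 ≤ n) (π : Finpartition (Finset.Icc 2 n)) :
    ∃ p : ℕ → ℕ, IsLabelledTree n p ∧ phiEq n p π := by
  classical
  set M : ℕ → ℕ := fun v => (π.part v).max.getD 0 with hM
  set p : ℕ → ℕ := fun v =>
    if 2 ≤ v ∧ v ≤ n then (if v = M v then 1 else M v) else v with hp
  -- basic facts about M
  have hpartmem : ∀ v ∈ Finset.Icc 2 n, M v ∈ π.part v := by
    intro v hv
    have hne : (π.part v).Nonempty := ⟨v, π.mem_part hv⟩
    obtain ⟨m, hm⟩ := Finset.max_of_nonempty hne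
    simp only [hM, hm, Option.getD_some]
    exact Finset.mem_of_max hm
  have hle : ∀ v ∈ Finset.Icc 2 n, v ≤ M v := by
    intro v hv
    have hne : (π.part v).Nonempty := ⟨v, π.mem_part hv⟩
    obtain ⟨m, hm⟩ := Finset.max_of_nonempty hne
    simp only [hM, hm, Option.getD_some]
    exact Finset.le_max_of_eq (π.mem_part hv) hm
  have hMicc : ∀ v ∈ Finset.Icc 2 n, M v ∈ Finset.Icc 2 n := by
    intro v hv
    exact π.le (π.part_mem.mpr hv) (hpartmem v hv)
  have hMM : ∀ v ∈ Finset.Icc 2 n, M (M v) = M v := by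
    intro v hv
    have := π.part_eq_of_mem (π.part_mem.mpr hv) (hpartmem v hv)
    simp only [hM]
    rw [this]
  have hpv1 : ∀ v, 2 ≤ v → v ≤ n → p v = if v = M v then 1 else M v := by
    intro v h2 hn'
    show (if 2 ≤ v ∧ v ≤ n then (if v = M v then 1 else M v) else v) = _
    exact if_pos ⟨h2, hn'⟩
  have hpv2 : ∀ v, ¬ (2 ≤ v ∧ v ≤ n) → p v = v := by
    intro v h
    show (if 2 ≤ v ∧ v ≤ n then (if v = M v then 1 else M v) else v) = v
    exact if_neg h
  have hhead : ∀ v ∈ Finset.Icc 2 n, head p v = M v := by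
    intro v hv
    rw [Finset.mem_Icc] at hv
    have hle' := hle v (Finset.mem_Icc.mpr hv)
    unfold head
    rw [hpv1 v hv.1 hv.2]
    by_cases h : v = M v
    · rw [if_pos h]; omega
    · rw [if_neg h]; omega
  refine ⟨p, ⟨?_, ?_, ?_⟩, ?_⟩
  · intro v h2 hn'
    have hv : v ∈ Finset.Icc 2 n := Finset.mem_Icc.mpr ⟨h2, hn'⟩
    have h1 := hle v hv
    have h2' := Finset.mem_Icc.mp (hMicc v hv)
    rw [hpv1 v h2 hn']
    by_cases h : v = M v
    · rw [if_pos h]; omega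
    · rw [if_neg h]; omega
  · intro v h2 hn'
    have hv : v ∈ Finset.Icc 2 n := Finset.mem_Icc.mpr ⟨h2, hn'⟩
    refine ⟨2, ?_⟩
    have h2' := Finset.mem_Icc.mp (hMicc v hv)
    have hp1 : p 1 = 1 := hpv2 1 (by omega)
    show p (p v) = 1
    rw [hpv1 v h2 hn']
    by_cases h : v = M v
    · rw [if_pos h, hp1]
    · rw [if_neg h, hpv1 (M v) h2'.1 h2'.2, if_pos (hMM v hv).symm]
  · exact hpv2
  · intro v hv w hw
    rw [hhead v hv, hhead w hw]
    constructor
    · rintro ⟨b, hb, hvb, hwb⟩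
      have h1 := π.part_eq_of_mem hb hvb
      have h2 := π.part_eq_of_mem hb hwb
      simp only [hM]
      rw [h1, h2]
    · intro h
      refine ⟨π.part v, π.part_mem.mpr hv, π.mem_part hv, ?_⟩
      have hMvw : M w ∈ π.part v := h ▸ hpartmem v hv
      have : π.part v = π.part w :=
        π.eq_of_mem_parts (π.part_mem.mpr hv) (π.part_mem.mpr hw) hMvw (hpartmem w hw)
      rw [this]; exact π.mem_part hw
end
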